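/- arXiv:2411.00979 — 7 statements merged into one kernel-verified Lean document; each statement's English description precedes it below -/
import Mathlib

section
/- Let ‖·‖ be a norm on ℝ^d, let g : ℝ^d → ℝ ∪ {+∞} be proper, convex, lower semicontinuous and γ-strongly convex with respect to ‖·‖ (γ ≥ 0), let h : ℝ^d → ℝ be differentiable and 1-strongly convex with respect to ‖·‖ with Bregman divergence D(x,y) = h(x) − h(y) − ⟨∇h(y), x−y⟩, and let F : ℝ^d → ℝ^d be monotone. Fix x_0 ∈ dom(g), positive step sizes a_1,…,a_K with conventions a_0 = A_0 = 0 and A_k = Σ_{i=1}^k a_i, and arbitrary vectors F̂_1,…,F̂_K ∈ ℝ^d. For 1 ≤ k ≤ K let x_k be the (unique) minimizer over u ∈ ℝ^d of Σ_{i=1}^k a_i (⟨F̂_i, u⟩ + g(u)) + D(u, x_0), and let x̄_k = (1/A_k) Σ_{i=1}^k a_i x_i. Then for every 1 ≤ k ≤ K and every x ∈ dom(g): Gap(x̄_k, x) ≤ ( Σ_{i=1}^k E_i + D(x, x_0) − ((A_k γ + 1)/2) ‖x − x_k‖² ) / A_k, where E_i := a_i ⟨F(x_i) − F̂_i, x_i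 − x⟩ − ((A_{i−1} γ + 1)/2) ‖x_i − x_{i−1}‖². -/
/-!
Let ψₙ(u) = ∑_{i ≤ n} aᵢ ⟪F̂ᵢ, u⟫ + D(u, x₀) + Aₙ g(u). It is (Aₙγ + 1)-strongly convex and
minimized at xₙ (at n = 0 because D(·, x₀) ≥ 0), hence
ψₙ(xₙ) + (Aₙγ + 1)/2 ‖u − xₙ‖² ≤ ψₙ(u). Since ψₙ₊₁ = ψₙ + aₙ₊₁ (⟪F̂ₙ₊₁, ·⟫ + g), taking
u = xₙ₊₁ and telescoping, then u = x at the last step, bounds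
∑ aᵢ (⟪F̂ᵢ, xᵢ⟫ + g(xᵢ)) plus all the quadratic terms by ψₖ(x).
On the other side, monotonicity of F gives ⟪F x, xᵢ − x⟫ ≤ ⟪F xᵢ, xᵢ − x⟫ and Jensen's
inequality gives Aₖ g(x̄ₖ) ≤ ∑ aᵢ g(xᵢ), so Aₖ Gap(x̄ₖ, x) ≤ ∑ aᵢ (⟪F xᵢ, xᵢ − x⟫ + g(xᵢ) − g(x)).
Writing ⟪F xᵢ, xᵢ − x⟫ = ⟪F xᵢ − F̂ᵢ, xᵢ − x⟫ + ⟪F̂ᵢ, xᵢ⟫ − ⟪F̂ᵢ, x⟫ and combining the two bounds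
gives the claim.
-/

open Finset Filter Topology
open scoped RealInnerProductSpace

variable {E : Type*} [NormedAddCommGroup E] [InnerProductSpace ℝ E]

def StrongConvexOnWrt (s : Set E) (nrm : E → ℝ) (μ : ℝ) (f : E → ℝ) : Prop :=
  Convex ℝ s ∧ ∀ ⦃x⦄, x ∈ s → ∀ ⦃y⦄, y ∈ s → ∀ t ∈ Set.Icc (0 : ℝ) 1,
    f (t • x + (1 - t) • y) ≤ t * f x + (1 - t) * f y - μ / 2 * t * (1 - t) * nrm (x - y) ^ 2

namespace StrongConvexOnWrt

variable {s t : Set E} {nrm : E → ℝ} {μ ν : ℝ} {f f₁ f₂ : E → ℝ}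

theorem subset (hf : StrongConvexOnWrt s nrm μ f) (hts : t ⊆ s) (ht : Convex ℝ t) :
    StrongConvexOnWrt t nrm μ f :=
  ⟨ht, fun _ hx _ hy => hf.2 (hts hx) (hts hy)⟩

theorem convexOn (hf : StrongConvexOnWrt s nrm μ f) (hμ : 0 ≤ μ) : ConvexOn ℝ s f := by
  refine ⟨hf.1, fun x hx y hy a b ha hb hab => ?_⟩
  obtain rfl : b = 1 - a := by linarith
  have hstrong := hf.2 hx hy a ⟨ha, by linarith⟩
  have hquad : 0 ≤ μ / 2 * a * (1 - a) * nrm (x - y) ^ 2 := by positivity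
  simp only [smul_eq_mul]
  linarith

theorem add (hf₁ : StrongConvexOnWrt s nrm μ f₁) (hf₂ : StrongConvexOnWrt s nrm ν f₂) :
    StrongConvexOnWrt s nrm (μ + ν) (fun x => f₁ x + f₂ x) := by
  refine ⟨hf₁.1, fun x hx y hy t ht => ?_⟩
  linarith [hf₁.2 hx hy t ht, hf₂.2 hx hy t ht]

theorem const_mul (hf : StrongConvexOnWrt s nrm μ f) {c : ℝ} (hc : 0 ≤ c) :
    StrongConvexOnWrt s nrm (c * μ) (fun x => c * f x) := by
  refine ⟨hf.1, fun x hx y hy t ht => ?_⟩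
  nlinarith [mul_le_mul_of_nonneg_left (hf.2 hx hy t ht) hc]

theorem add_inner_add_const (hf : StrongConvexOnWrt s nrm μ f) (w : E) (c : ℝ) :
    StrongConvexOnWrt s nrm μ (fun x => f x + ⟪w, x⟫ + c) := by
  refine ⟨hf.1, fun x hx y hy t ht => ?_⟩
  simp only [inner_add_right, real_inner_smul_right]
  linarith [hf.2 hx hy t ht]

theorem add_le_of_isMinOn (hf : StrongConvexOnWrt s nrm μ f) {u v : E} (hmin : IsMinOn f s v)
    (hv : v ∈ s) (hu : u ∈ s) : f v + μ / 2 * nrm (u - v) ^ 2 ≤ f u := by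
  -- compare `f v` with `f` at `t • u + (1 - t) • v`, divide by `t` and let `t → 0⁺`
  have key : ∀ t ∈ Set.Ioo (0 : ℝ) 1, f v + μ / 2 * nrm (u - v) ^ 2 * (1 - t) ≤ f u := by
    intro t ht
    have hz : f v ≤ f (t • u + (1 - t) • v) :=
      hmin (hf.1 hu hv ht.1.le (by linarith [ht.2]) (by ring))
    have hconv := hf.2 hu hv t ⟨ht.1.le, ht.2.le⟩
    have hscaled : t * (f v + μ / 2 * nrm (u - v) ^ 2 * (1 - t) - f u) ≤ 0 := by nlinarith
    nlinarith [ht.1]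
  have hlim : Tendsto (fun t : ℝ => f v + μ / 2 * nrm (u - v) ^ 2 * (1 - t)) (𝓝[>] 0)
      (𝓝 (f v + μ / 2 * nrm (u - v) ^ 2)) := by
    have hcont : ContinuousAt (fun t : ℝ => f v + μ / 2 * nrm (u - v) ^ 2 * (1 - t)) 0 := by
      fun_prop
    simpa using hcont.continuousWithinAt.tendsto
  refine le_of_tendsto hlim ?_
  filter_upwards [Ioo_mem_nhdsGT (zero_lt_one' ℝ)] with t ht using key t ht

end StrongConvexOnWrt

theorem strongConvexOnWrt_toReal {nrm : E → ℝ} {γ : ℝ} {g : E → EReal} (hbot : ∀ x, g x ≠ ⊥)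
    (hg : ∀ x y : E, ∀ t : ℝ, t ∈ Set.Icc (0 : ℝ) 1 →
      g (t • x + (1 - t) • y) ≤ (t : EReal) * g x + ((1 - t : ℝ) : EReal) * g y
        - (((γ / 2) * t * (1 - t) * (nrm (x - y)) ^ 2 : ℝ) : EReal)) :
    StrongConvexOnWrt {x | g x ≠ ⊤} nrm γ (fun x => (g x).toReal) := by
  have key : ∀ x, g x ≠ ⊤ → ∀ y, g y ≠ ⊤ → ∀ t ∈ Set.Icc (0 : ℝ) 1,
      g (t • x + (1 - t) • y) ≤ ((t * (g x).toReal + (1 - t) * (g y).toReal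
        - γ / 2 * t * (1 - t) * nrm (x - y) ^ 2 : ℝ) : EReal) := by
    intro x hx y hy t ht
    have := hg x y t ht
    rwa [← EReal.coe_toReal hx (hbot x), ← EReal.coe_toReal hy (hbot y)] at this
  refine ⟨?_, fun x hx y hy t ht => ?_⟩
  · intro x hx y hy a b ha hb hab
    obtain rfl : b = 1 - a := by linarith
    exact ((key x hx y hy a ⟨ha, by linarith⟩).trans_lt (EReal.coe_lt_top _)).ne
  · have := key x hx y hy t ht
    rw [← EReal.coe_toReal ((this.trans_lt (EReal.coe_lt_top _)).ne) (hbot _)] at this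
    exact_mod_cast this

def bregman (h : E → ℝ) (h' : E → E) (x y : E) : ℝ := h x - h y - ⟪h' y, x - y⟫

theorem StrongConvexOnWrt.bregman {s : Set E} {nrm : E → ℝ} {μ : ℝ} {h : E → ℝ}
    (hh : StrongConvexOnWrt s nrm μ h) (h' : E → E) (y : E) :
    StrongConvexOnWrt s nrm μ (fun x => bregman h h' x y) := by
  convert hh.add_inner_add_const (-h' y) (⟪h' y, y⟫ - h y) using 2 with x
  simp only [_root_.bregman, inner_sub_right, inner_neg_left]
  ring

theorem bregman_nonneg [CompleteSpace E] {h : E → ℝ} {h' : E → E} (hh : ConvexOn ℝ Set.univ h)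
    {y : E} (hgrad : HasGradientAt h (h' y) y) (x : E) : 0 ≤ bregman h h' x y := by
  let ℓ : ℝ →ᵃ[ℝ] E := AffineMap.lineMap y x
  have hℓ : ∀ t, ℓ t = t • (x - y) + y := AffineMap.lineMap_apply_module' y x
  have hline : ConvexOn ℝ Set.univ (h ∘ ℓ) := by simpa using hh.comp_affineMap ℓ
  have hder : HasDerivAt (h ∘ ℓ) ⟪h' y, x - y⟫ 0 := by
    have hl : HasDerivAt ℓ (x - y) 0 := by
      rw [show (ℓ : ℝ → E) = fun t => t • (x - y) + y from funext hℓ]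
      simpa using ((hasDerivAt_id (0 : ℝ)).smul_const (x - y)).add_const y
    have hh' : HasFDerivAt h (InnerProductSpace.toDual ℝ E (h' y)) (ℓ 0) := by
      simpa [hℓ] using hgrad.hasFDerivAt
    simpa using hh'.comp_hasDerivAt 0 hl
  have := hline.le_slope_of_hasDerivAt (Set.mem_univ 0) (Set.mem_univ 1) zero_lt_one hder
  simp only [slope, Function.comp_apply, hℓ, sub_zero, inv_one, one_smul, zero_smul, zero_add,
    sub_add_cancel, vsub_eq_sub, smul_eq_mul, one_mul] at this
  rw [bregman]
  linarith

theorem add_sum_Icc_le_of_forall_lt {α : Type*} {ψ ℓ : ℕ → α → ℝ} {x : ℕ → α} {b : ℕ → ℝ}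
    (hψ : ∀ m u, ψ (m + 1) u = ψ m u + ℓ (m + 1) u) :
    ∀ {n : ℕ}, (∀ m < n, ψ m (x m) + b (m + 1) ≤ ψ m (x (m + 1))) →
      ψ 0 (x 0) + ∑ i ∈ Icc 1 n, (ℓ i (x i) + b i) ≤ ψ n (x n)
  | 0, _ => by simp
  | n + 1, hb => by
    have ih := add_sum_Icc_le_of_forall_lt hψ fun m hm => hb m (hm.trans n.lt_succ_self)
    rw [sum_Icc_succ_top (Nat.le_add_left 1 n), hψ]
    linarith [hb n n.lt_succ_self]

theorem sum_mul_gap_centerMass_le {ι : Type*} {t : Finset ι} {w : ι → ℝ} {p : ι → E}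
    {s : Set E} {G : E → ℝ} {F : E → E} (hG : ConvexOn ℝ s G)
    (hF : ∀ x y, 0 ≤ ⟪F x - F y, x - y⟫) (hw : ∀ i ∈ t, 0 ≤ w i) (hw' : 0 < ∑ i ∈ t, w i)
    (hp : ∀ i ∈ t, p i ∈ s) (x : E) :
    (∑ i ∈ t, w i) * (⟪F x, t.centerMass w p - x⟫ - G x + G (t.centerMass w p))
      ≤ ∑ i ∈ t, w i * (⟪F (p i), p i - x⟫ + G (p i) - G x) := by
  have hinner : (∑ i ∈ t, w i) * ⟪F x, t.centerMass w p - x⟫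
      = ∑ i ∈ t, w i * ⟪F x, p i - x⟫ := by
    simp only [centerMass, inner_sub_right, real_inner_smul_right, inner_sum, mul_sub,
      sum_sub_distrib, ← sum_mul]
    field_simp
  have hjensen : (∑ i ∈ t, w i) * G (t.centerMass w p) ≤ ∑ i ∈ t, w i * G (p i) := by
    have := hG.map_centerMass_le hw hw' hp
    simp only [centerMass, smul_eq_mul, Function.comp_apply] at this
    exact (le_inv_mul_iff₀ hw').mp this
  have hmono : ∑ i ∈ t, w i * ⟪F x, p i - x⟫ ≤ ∑ i ∈ t, w i * ⟪F (p i), p i - x⟫ := by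
    refine sum_le_sum fun i hi => mul_le_mul_of_nonneg_left ?_ (hw i hi)
    have := hF (p i) x
    rw [inner_sub_left] at this
    linarith
  simp only [mul_add, mul_sub, sum_add_distrib, sum_sub_distrib, ← sum_mul] at hinner ⊢
  linarith

theorem isMinOn_add_mul_toReal {α : Type*} {p : α → ℝ} {g : α → EReal} {c : ℝ} {v : α}
    (hbot : ∀ x, g x ≠ ⊥) (hv : g v ≠ ⊤)
    (hmin : ∀ u, (p v : EReal) + (c : EReal) * g v ≤ (p u : EReal) + (c : EReal) * g u) :
    IsMinOn (fun u => p u + c * (g u).toReal) {u | g u ≠ ⊤} v := by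
  intro u hu
  have := hmin u
  rw [← EReal.coe_toReal hv (hbot v), ← EReal.coe_toReal hu (hbot u)] at this
  exact_mod_cast this

def dualAveragingObjective (a : ℕ → ℝ) (Fhat : ℕ → E) (G D : E → ℝ) (n : ℕ) (u : E) : ℝ :=
  ∑ i ∈ Icc 1 n, a i * ⟪Fhat i, u⟫ + D u + (∑ i ∈ Icc 1 n, a i) * G u

section dualAveraging

variable {a : ℕ → ℝ} {Fhat : ℕ → E} {G D : E → ℝ}

theorem dualAveragingObjective_succ (n : ℕ) (u : E) :
    dualAveragingObjective a Fhat G D (n + 1) u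
      = dualAveragingObjective a Fhat G D n u + a (n + 1) * (⟪Fhat (n + 1), u⟫ + G u) := by
  simp only [dualAveragingObjective, sum_Icc_succ_top (Nat.le_add_left 1 n)]
  ring

theorem strongConvexOnWrt_dualAveragingObjective {s : Set E} {nrm : E → ℝ} {γ : ℝ}
    (hG : StrongConvexOnWrt s nrm γ G) (hD : StrongConvexOnWrt s nrm 1 D) {n : ℕ}
    (ha : 0 ≤ ∑ i ∈ Icc 1 n, a i) :
    StrongConvexOnWrt s nrm ((∑ i ∈ Icc 1 n, a i) * γ + 1)
      (dualAveragingObjective a Fhat G D n) := by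
  convert ((hG.const_mul ha).add hD).add_inner_add_const (∑ i ∈ Icc 1 n, a i • Fhat i) 0
    using 2 with u
  simp only [dualAveragingObjective, sum_inner, real_inner_smul_left]
  ring

theorem sum_add_le_dualAveragingObjective {s : Set E} {nrm : E → ℝ} {γ : ℝ} {x : ℕ → E}
    {k : ℕ} (hG : StrongConvexOnWrt s nrm γ G) (hD : StrongConvexOnWrt s nrm 1 D)
    (hD0 : D (x 0) = 0) (ha : ∀ i ∈ Icc 1 k, 0 ≤ a i) (hx : ∀ n ≤ k, x n ∈ s)
    (hmin : ∀ n ≤ k, IsMinOn (dualAveragingObjective a Fhat G D n) s (x n))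
    {u : E} (hu : u ∈ s) :
    ∑ i ∈ Icc 1 k, (a i * (⟪Fhat i, x i⟫ + G (x i))
        + ((∑ j ∈ Icc 1 (i - 1), a j) * γ + 1) / 2 * nrm (x i - x (i - 1)) ^ 2)
      + ((∑ i ∈ Icc 1 k, a i) * γ + 1) / 2 * nrm (u - x k) ^ 2
      ≤ dualAveragingObjective a Fhat G D k u := by
  have three_point : ∀ n ≤ k, ∀ v ∈ s, dualAveragingObjective a Fhat G D n (x n)
      + ((∑ i ∈ Icc 1 n, a i) * γ + 1) / 2 * nrm (v - x n) ^ 2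
      ≤ dualAveragingObjective a Fhat G D n v := by
    intro n hn v hv
    have hA : 0 ≤ ∑ i ∈ Icc 1 n, a i :=
      sum_nonneg fun i hi => ha i (Icc_subset_Icc_right hn hi)
    exact (strongConvexOnWrt_dualAveragingObjective hG hD hA).add_le_of_isMinOn (hmin n hn)
      (hx n hn) hv
  have htele := add_sum_Icc_le_of_forall_lt (x := x) (n := k)
    (ℓ := fun i u => a i * (⟪Fhat i, u⟫ + G u))
    (b := fun i => ((∑ j ∈ Icc 1 (i - 1), a j) * γ + 1) / 2 * nrm (x i - x (i - 1)) ^ 2)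
    dualAveragingObjective_succ fun m hm => by
      simpa using three_point m hm.le (x (m + 1)) (hx _ hm)
  have h0 : dualAveragingObjective a Fhat G D 0 (x 0) = 0 := by
    simp [dualAveragingObjective, hD0]
  linarith [three_point k le_rfl u hu]

end dualAveraging

theorem stmt2_general
    (d : ℕ)
    (nrm : EuclideanSpace ℝ (Fin d) → ℝ)
    (γ : ℝ) (hγ : 0 ≤ γ)
    (g : EuclideanSpace ℝ (Fin d) → EReal)
    (hg_ne_bot : ∀ x, g x ≠ ⊥)
    (hg_sconv : ∀ x y : EuclideanSpace ℝ (Fin d), ∀ t : ℝ, t ∈ Set.Icc (0 : ℝ) 1 →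
      g (t • x + (1 - t) • y) ≤ (t : EReal) * g x + ((1 - t : ℝ) : EReal) * g y
        - (((γ / 2) * t * (1 - t) * (nrm (x - y)) ^ 2 : ℝ) : EReal))
    (h : EuclideanSpace ℝ (Fin d) → ℝ)
    (h' : EuclideanSpace ℝ (Fin d) → EuclideanSpace ℝ (Fin d))
    (hh_diff : ∀ x, HasGradientAt h (h' x) x)
    (hh_sconv : ∀ x y : EuclideanSpace ℝ (Fin d), ∀ t : ℝ, t ∈ Set.Icc (0 : ℝ) 1 →
      h (t • x + (1 - t) • y) ≤
        t * h x + (1 - t) * h y - (1 / 2) * t * (1 - t) * (nrm (x - y)) ^ 2)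
    (F : EuclideanSpace ℝ (Fin d) → EuclideanSpace ℝ (Fin d))
    (hF_mono : ∀ x y, 0 ≤ ⟪F x - F y, x - y⟫)
    (K : ℕ)
    (x0 : EuclideanSpace ℝ (Fin d))
    (a : ℕ → ℝ) (ha_pos : ∀ i, 1 ≤ i → i ≤ K → 0 < a i)
    (Fhat : ℕ → EuclideanSpace ℝ (Fin d))
    (xseq : ℕ → EuclideanSpace ℝ (Fin d)) (hxseq0 : xseq 0 = x0)
    (hx_dom : ∀ k, k ≤ K → g (xseq k) ≠ ⊤)
    (hx_min : ∀ k, 1 ≤ k → k ≤ K → ∀ u,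
      ((∑ i ∈ Finset.Icc 1 k, a i * ⟪Fhat i, xseq k⟫
          + (h (xseq k) - h x0 - ⟪h' x0, xseq k - x0⟫) : ℝ) : EReal)
        + ((∑ i ∈ Finset.Icc 1 k, a i : ℝ) : EReal) * g (xseq k)
      ≤ ((∑ i ∈ Finset.Icc 1 k, a i * ⟪Fhat i, u⟫
          + (h u - h x0 - ⟪h' x0, u - x0⟫) : ℝ) : EReal)
        + ((∑ i ∈ Finset.Icc 1 k, a i : ℝ) : EReal) * g u) :
    ∀ k, 1 ≤ k → k ≤ K → ∀ x, g x ≠ ⊤ →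
      ⟪F x, ((∑ i ∈ Finset.Icc 1 k, a i)⁻¹) • (∑ i ∈ Finset.Icc 1 k, a i • xseq i) - x⟫
          - (g x).toReal
          + (g (((∑ i ∈ Finset.Icc 1 k, a i)⁻¹) • (∑ i ∈ Finset.Icc 1 k, a i • xseq i))).toReal
        ≤ ((∑ i ∈ Finset.Icc 1 k,
              (a i * ⟪F (xseq i) - Fhat i, xseq i - x⟫
                - (((∑ i' ∈ Finset.Icc 1 (i - 1), a i') * γ + 1) / 2)
                    * (nrm (xseq i - xseq (i - 1))) ^ 2))
            + (h x - h x0 - ⟪h' x0, x - x0⟫)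
            - (((∑ i ∈ Finset.Icc 1 k, a i) * γ + 1) / 2) * (nrm (x - xseq k)) ^ 2)
          / (∑ i ∈ Finset.Icc 1 k, a i) := by
  intro k hk1 hkK x hx
  set G := fun u => (g u).toReal
  set D := fun u => bregman h h' u x0
  have hG : StrongConvexOnWrt {u | g u ≠ ⊤} nrm γ G :=
    strongConvexOnWrt_toReal hg_ne_bot hg_sconv
  have hh : StrongConvexOnWrt Set.univ nrm 1 h := ⟨convex_univ, fun u _ v _ => hh_sconv u v⟩
  have hD : StrongConvexOnWrt {u | g u ≠ ⊤} nrm 1 D :=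
    (hh.bregman h' x0).subset (Set.subset_univ _) hG.1
  have ha : ∀ i ∈ Icc 1 k, 0 < a i := fun i hi =>
    ha_pos i (mem_Icc.1 hi).1 ((mem_Icc.1 hi).2.trans hkK)
  have hA : 0 < ∑ i ∈ Icc 1 k, a i := sum_pos ha (nonempty_Icc.2 hk1)
  have hmin : ∀ n ≤ k,
      IsMinOn (dualAveragingObjective a Fhat G D n) {u | g u ≠ ⊤} (xseq n) := by
    rintro (_ | n) hn
    · intro u _
      simpa [dualAveragingObjective, D, hxseq0, bregman] using
        bregman_nonneg (hh.convexOn zero_le_one) (hh_diff x0) u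
    · exact isMinOn_add_mul_toReal hg_ne_bot (hx_dom _ (hn.trans hkK))
        (hx_min _ n.succ_pos (hn.trans hkK))
  have hregret := sum_add_le_dualAveragingObjective hG hD (by simp [D, hxseq0, bregman])
    (fun i hi => (ha i hi).le) (fun n hn => hx_dom n (hn.trans hkK)) hmin hx
  have hgap := sum_mul_gap_centerMass_le (hG.convexOn hγ) hF_mono (fun i hi => (ha i hi).le) hA
    (fun i hi => hx_dom i ((mem_Icc.1 hi).2.trans hkK)) x
  rw [le_div_iff₀ hA]
  simp only [dualAveragingObjective, D, bregman] at hregret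
  simp only [centerMass] at hgap
  simp only [mul_add, mul_sub, sum_add_distrib, sum_sub_distrib, ← sum_mul, inner_sub_left,
    inner_sub_right] at hgap hregret ⊢
  linarith

/-- Generic gap bound (Lemma 3.1 of the paper): for dual-averaging iterates x_k
driven by arbitrary extrapolated operators F̂_i, the gap of the averaged iterate
x̄_k is controlled by the error terms E_i, the initial Bregman divergence and a
negative quadratic term. Here g takes values in EReal, dom(g) = {x | g x ≠ ⊤},
D(u, v) = h(u) − h(v) − ⟪∇h(v), u − v⟫, A_k = Σ_{i=1}^k a_i and
Gap(x', x) = ⟪F(x), x' − x⟫ − g(x) + g(x'). -/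
theorem stmt2
    (d : ℕ)
    (nrm : EuclideanSpace ℝ (Fin d) → ℝ)
    (hnrm_nonneg : ∀ x, 0 ≤ nrm x)
    (hnrm_zero : ∀ x, nrm x = 0 ↔ x = 0)
    (hnrm_add : ∀ x y, nrm (x + y) ≤ nrm x + nrm y)
    (hnrm_smul : ∀ (c : ℝ) x, nrm (c • x) = |c| * nrm x)
    (γ : ℝ) (hγ : 0 ≤ γ)
    (g : EuclideanSpace ℝ (Fin d) → EReal)
    (hg_ne_bot : ∀ x, g x ≠ ⊥)
    (hg_proper : ∃ x, g x ≠ ⊤)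
    (hg_lsc : LowerSemicontinuous g)
    (hg_sconv : ∀ x y : EuclideanSpace ℝ (Fin d), ∀ t : ℝ, t ∈ Set.Icc (0 : ℝ) 1 →
      g (t • x + (1 - t) • y) ≤ (t : EReal) * g x + ((1 - t : ℝ) : EReal) * g y
        - (((γ / 2) * t * (1 - t) * (nrm (x - y)) ^ 2 : ℝ) : EReal))
    (h : EuclideanSpace ℝ (Fin d) → ℝ)
    (h' : EuclideanSpace ℝ (Fin d) → EuclideanSpace ℝ (Fin d))
    (hh_diff : ∀ x, HasGradientAt h (h' x) x)
    (hh_sconv : ∀ x y : EuclideanSpace ℝ (Fin d), ∀ t : ℝ, t ∈ Set.Icc (0 : ℝ) 1 →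
      h (t • x + (1 - t) • y) ≤
        t * h x + (1 - t) * h y - (1 / 2) * t * (1 - t) * (nrm (x - y)) ^ 2)
    (F : EuclideanSpace ℝ (Fin d) → EuclideanSpace ℝ (Fin d))
    (hF_mono : ∀ x y, 0 ≤ ⟪F x - F y, x - y⟫)
    (K : ℕ) (hK : 1 ≤ K)
    (x0 : EuclideanSpace ℝ (Fin d)) (hx0_dom : g x0 ≠ ⊤)
    (a : ℕ → ℝ) (ha0 : a 0 = 0) (ha_pos : ∀ i, 1 ≤ i → i ≤ K → 0 < a i)
    (Fhat : ℕ → EuclideanSpace ℝ (Fin d))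
    (xseq : ℕ → EuclideanSpace ℝ (Fin d)) (hxseq0 : xseq 0 = x0)
    (hx_dom : ∀ k, k ≤ K → g (xseq k) ≠ ⊤)
    (hx_min : ∀ k, 1 ≤ k → k ≤ K → ∀ u,
      ((∑ i ∈ Finset.Icc 1 k, a i * ⟪Fhat i, xseq k⟫
          + (h (xseq k) - h x0 - ⟪h' x0, xseq k - x0⟫) : ℝ) : EReal)
        + ((∑ i ∈ Finset.Icc 1 k, a i : ℝ) : EReal) * g (xseq k)
      ≤ ((∑ i ∈ Finset.Icc 1 k, a i * ⟪Fhat i, u⟫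
          + (h u - h x0 - ⟪h' x0, u - x0⟫) : ℝ) : EReal)
        + ((∑ i ∈ Finset.Icc 1 k, a i : ℝ) : EReal) * g u) :
    ∀ k, 1 ≤ k → k ≤ K → ∀ x, g x ≠ ⊤ →
      ⟪F x, ((∑ i ∈ Finset.Icc 1 k, a i)⁻¹) • (∑ i ∈ Finset.Icc 1 k, a i • xseq i) - x⟫
          - (g x).toReal
          + (g (((∑ i ∈ Finset.Icc 1 k, a i)⁻¹) • (∑ i ∈ Finset.Icc 1 k, a i • xseq i))).toReal
        ≤ ((∑ i ∈ Finset.Icc 1 k,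
              (a i * ⟪F (xseq i) - Fhat i, xseq i - x⟫
                - (((∑ i' ∈ Finset.Icc 1 (i - 1), a i') * γ + 1) / 2)
                    * (nrm (xseq i - xseq (i - 1))) ^ 2))
            + (h x - h x0 - ⟪h' x0, x - x0⟫)
            - (((∑ i ∈ Finset.Icc 1 k, a i) * γ + 1) / 2) * (nrm (x - xseq k)) ^ 2)
          / (∑ i ∈ Finset.Icc 1 k, a i) :=
  stmt2_general d nrm γ hγ g hg_ne_bot hg_sconv h h' hh_diff hh_sconv F hF_mono K x0 a ha_pos Fhat
    xseq hxseq0 hx_dom hx_min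
end

section
/- Let (Ω, 𝔽, P) be a probability space with a filtration (H_i)_{i≥0}, let V be a finite-dimensional real normed vector space, and let q ∈ (0, 1]. Let Y_0, Y_1, …, Y_K be square-integrable V-valued random vectors with Y_i measurable with respect to H_i for each i. Let ξ_1, …, ξ_K be {0,1}-valued random variables with P(ξ_i = 1) = q, such that ξ_i is independent of H_i and ξ_i is H_{i+1}-measurable. Define Z_0 = Y_0 and, for i ≥ 1, Z_i = Y_i if ξ_i = 1 and Z_i = Z_{i−1} otherwise. Then for every 1 ≤ i ≤ K: E[‖Y_i − Z_{i−1}‖²] ≤ (5/q) Σ_{i'=1}^{i} (1 − q/2)^{i − i'} E[‖Y_{i'} − Y_{i'−1}‖²]. -/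
/-!
Write `D i = E‖Y i - Z (i - 1)‖²` and `d i = E‖Y i - Y (i - 1)‖²`. Since
`Y (i + 1) - Z i = (Y (i + 1) - Y i) + 1{ξ i = false} • (Y i - Z (i - 1))`, Young's inequality
with parameter `q / 2` bounds `‖Y (i + 1) - Z i‖²` pointwise. The refresh indicator is independent
of `H i`, with respect to which `Y i - Z (i - 1)` is measurable, so taking expectations produces
the factor `(1 + q / 2)(1 - q) ≤ 1 - q / 2` and the recursion
`D (i + 1) ≤ (1 - q / 2) D i + (3 / q) d (i + 1)`, with `D 1 = d 1`. Unrolling it gives the bound.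
-/

open MeasureTheory ProbabilityTheory Finset

theorem le_mul_sum_pow_of_le_mul_add {K : ℕ} {r c : ℝ} {D d : ℕ → ℝ} (hr : 0 ≤ r)
    (h₁ : D 1 ≤ c * d 1)
    (hstep : ∀ i, 1 ≤ i → i + 1 ≤ K → D (i + 1) ≤ r * D i + c * d (i + 1)) :
    ∀ i, 1 ≤ i → i ≤ K → D i ≤ c * ∑ j ∈ Icc 1 i, r ^ (i - j) * d j := by
  intro i hi
  induction i, hi using Nat.le_induction with
  | base => simpa using fun _ => h₁
  | succ n hn ih =>
    intro hnK
    have hsum : ∑ j ∈ Icc 1 (n + 1), r ^ (n + 1 - j) * d j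
        = r * ∑ j ∈ Icc 1 n, r ^ (n - j) * d j + d (n + 1) := by
      rw [sum_Icc_succ_top (by omega), mul_sum, Nat.sub_self, pow_zero, one_mul]
      congr 1
      refine sum_congr rfl fun j hj => ?_
      rw [Nat.sub_add_comm (mem_Icc.mp hj).2, pow_succ]
      ring
    calc D (n + 1) ≤ r * D n + c * d (n + 1) := hstep n hn hnK
      _ ≤ r * (c * ∑ j ∈ Icc 1 n, r ^ (n - j) * d j) + c * d (n + 1) := by
          gcongr; exact ih (by omega)
      _ = c * ∑ j ∈ Icc 1 (n + 1), r ^ (n + 1 - j) * d j := by rw [hsum]; ring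

theorem ProbabilityTheory.Indep.setIntegral_eq_measureReal_mul {Ω : Type*}
    {m₁ m₂ mΩ : MeasurableSpace Ω} {μ : Measure Ω} (hm₁ : m₁ ≤ mΩ) (hm₂ : m₂ ≤ mΩ)
    (h : Indep m₁ m₂ μ) {s : Set Ω} (hs : MeasurableSet[m₁] s) {f : Ω → ℝ}
    (hf : Measurable[m₂] f) :
    ∫ ω in s, f ω ∂μ = μ.real s * ∫ ω, f ω ∂μ :=
  Indep.setIntegral_eq_mul (f := id) hm₁ (indep_of_indep_of_le_right h hf.comap_le)
    (hf.mono hm₂ le_rfl).aemeasurable hs aestronglyMeasurable_id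

theorem norm_add_sq_le_of_pos {E : Type*} [SeminormedAddGroup E] (a b : E) {ε : ℝ} (hε : 0 < ε) :
    ‖a + b‖ ^ 2 ≤ (1 + ε⁻¹) * ‖a‖ ^ 2 + (1 + ε) * ‖b‖ ^ 2 := by
  have hsq : (1 + ε⁻¹) * ‖a‖ ^ 2 + (1 + ε) * ‖b‖ ^ 2 - (‖a‖ + ‖b‖) ^ 2
      = ε⁻¹ * (‖a‖ - ε * ‖b‖) ^ 2 := by
    field_simp; ring
  have := (pow_le_pow_left₀ (norm_nonneg _) (norm_add_le a b) 2)
  nlinarith [hsq, inv_nonneg.mpr hε.le, sq_nonneg (‖a‖ - ε * ‖b‖)]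

theorem measureReal_setOf_eq_false {Ω : Type*} {m0 : MeasurableSpace Ω} {μ : Measure Ω}
    [IsProbabilityMeasure μ] {ξ : Ω → Bool} (hξ : MeasurableSet {ω | ξ ω = true}) {q : ℝ}
    (hq : 0 ≤ q) (hlaw : μ {ω | ξ ω = true} = ENNReal.ofReal q) :
    μ.real {ω | ξ ω = false} = 1 - q := by
  have hcompl : {ω | ξ ω = false} = {ω | ξ ω = true}ᶜ := by ext; simp
  rw [hcompl, probReal_compl_eq_one_sub hξ, measureReal_def, hlaw, ENNReal.toReal_ofReal hq]

section LazyRefresh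

variable {Ω V : Type*}

def IsLazyRefresh (Y : ℕ → Ω → V) (ξ : ℕ → Ω → Bool) (K : ℕ) (Z : ℕ → Ω → V) : Prop :=
  Z 0 = Y 0 ∧ ∀ i, 1 ≤ i → i ≤ K → ∀ ω, Z i ω = if ξ i ω = true then Y i ω else Z (i - 1) ω

variable {m0 : MeasurableSpace Ω} {μ : Measure Ω} {H : Filtration ℕ m0} {K : ℕ}
  {Y Z : ℕ → Ω → V} {ξ : ℕ → Ω → Bool}

namespace IsLazyRefresh

theorem measurable [MeasurableSpace V] (hZ : IsLazyRefresh Y ξ K Z)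
    (hY : ∀ i, i ≤ K → Measurable[H i] (Y i))
    (hξ : ∀ i, 1 ≤ i → i ≤ K → Measurable[H (i + 1)] (ξ i)) :
    ∀ i, i ≤ K → Measurable[H (i + 1)] (Z i) := by
  intro i
  induction i with
  | zero => intro h0; rw [hZ.1]; exact (hY 0 h0).mono (H.mono (Nat.zero_le 1)) le_rfl
  | succ n ih =>
    intro hn
    have hZn : Z (n + 1) = fun ω => if ξ (n + 1) ω = true then Y (n + 1) ω else Z n ω :=
      funext (hZ.2 (n + 1) (Nat.le_add_left 1 n) hn)
    rw [hZn]
    exact Measurable.ite (hξ (n + 1) (Nat.le_add_left 1 n) hn (measurableSet_singleton true))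
      ((hY (n + 1) hn).mono (H.mono (n + 1).le_succ) le_rfl)
      ((ih (by omega)).mono (H.mono (n + 1).le_succ) le_rfl)

variable [NormedAddCommGroup V]

theorem memLp (hZ : IsLazyRefresh Y ξ K Z) {p : ENNReal}
    (hY : ∀ i, i ≤ K → MemLp (Y i) p μ)
    (hξ : ∀ i, 1 ≤ i → i ≤ K → MeasurableSet {ω | ξ i ω = true}) :
    ∀ i, i ≤ K → MemLp (Z i) p μ := by
  intro i
  induction i with
  | zero => intro h0; rw [hZ.1]; exact hY 0 h0
  | succ n ih =>
    intro hn
    have hZn : Z (n + 1) = {ω | ξ (n + 1) ω = true}.piecewise (Y (n + 1)) (Z n) :=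
      funext (hZ.2 (n + 1) (Nat.le_add_left 1 n) hn)
    rw [hZn]
    exact MemLp.piecewise (hξ (n + 1) (Nat.le_add_left 1 n) hn) ((hY (n + 1) hn).restrict _)
      ((ih (by omega)).restrict _)

theorem norm_sub_sq_le (hZ : IsLazyRefresh Y ξ K Z) {i : ℕ} (hi : 1 ≤ i) (hiK : i ≤ K)
    {ε : ℝ} (hε : 0 < ε) (ω : Ω) :
    ‖Y (i + 1) ω - Z i ω‖ ^ 2 ≤ (1 + ε⁻¹) * ‖Y (i + 1) ω - Y i ω‖ ^ 2 +
      (1 + ε) * {ω | ξ i ω = false}.indicator (fun ω => ‖Y i ω - Z (i - 1) ω‖ ^ 2) ω := by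
  rw [hZ.2 i hi hiK ω]
  cases h : ξ i ω
  · have hsplit :
        Y (i + 1) ω - Z (i - 1) ω = (Y (i + 1) ω - Y i ω) + (Y i ω - Z (i - 1) ω) := by
      abel
    have hmem : ω ∈ {ω | ξ i ω = false} := h
    rw [if_neg Bool.false_ne_true, Set.indicator_of_mem hmem, hsplit]
    exact norm_add_sq_le_of_pos _ _ hε
  · have hnot : ω ∉ {ω | ξ i ω = false} := by simp [h]
    have : 0 ≤ ε⁻¹ * ‖Y (i + 1) ω - Y i ω‖ ^ 2 := by positivity
    rw [if_pos rfl, Set.indicator_of_notMem hnot]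
    linarith

theorem integral_norm_sub_sq_le [MeasurableSpace V] [BorelSpace V] [SecondCountableTopology V]
    [IsProbabilityMeasure μ]
    (hZ : IsLazyRefresh Y ξ K Z) {q : ℝ} (hq : q ∈ Set.Ioc (0 : ℝ) 1)
    (hY_meas : ∀ i, i ≤ K → Measurable[H i] (Y i)) (hY_L2 : ∀ i, i ≤ K → MemLp (Y i) 2 μ)
    (hξ_law : ∀ i, 1 ≤ i → i ≤ K → μ {ω | ξ i ω = true} = ENNReal.ofReal q)
    (hξ_indep : ∀ i, 1 ≤ i → i ≤ K → Indep (MeasurableSpace.comap (ξ i) ⊤) (H i) μ)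
    (hξ_meas : ∀ i, 1 ≤ i → i ≤ K → Measurable[H (i + 1)] (ξ i))
    {i : ℕ} (hi : 1 ≤ i) (hiK : i + 1 ≤ K) :
    ∫ ω, ‖Y (i + 1) ω - Z i ω‖ ^ 2 ∂μ ≤
      (1 - q / 2) * ∫ ω, ‖Y i ω - Z (i - 1) ω‖ ^ 2 ∂μ +
        (3 / q) * ∫ ω, ‖Y (i + 1) ω - Y i ω‖ ^ 2 ∂μ := by
  obtain ⟨hq0, hq1⟩ := hq
  have hiK' : i ≤ K := by omega
  have hξ_set : ∀ j, 1 ≤ j → j ≤ K → MeasurableSet {ω | ξ j ω = true} := fun j hj hjK =>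
    H.le (j + 1) _ (hξ_meas j hj hjK (measurableSet_singleton true))
  have hZ_L2 := hZ.memLp hY_L2 hξ_set
  set s := {ω | ξ i ω = false}
  set f := fun ω => ‖Y i ω - Z (i - 1) ω‖ ^ 2
  set d := fun ω => ‖Y (i + 1) ω - Y i ω‖ ^ 2
  have hs : MeasurableSet[MeasurableSpace.comap (ξ i) ⊤] s := ⟨{false}, trivial, rfl⟩
  have hξ_le : MeasurableSpace.comap (ξ i) ⊤ ≤ m0 :=
    ((hξ_meas i hi hiK').mono (H.le _) le_rfl).comap_le
  have hf_meas : Measurable[H i] f := by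
    have hZ_meas := hZ.measurable hY_meas hξ_meas (i - 1) (by omega)
    rw [Nat.sub_add_cancel hi] at hZ_meas
    exact (measurable_norm.pow_const 2).comp ((hY_meas i hiK').sub hZ_meas)
  have hf_int : Integrable f μ :=
    ((hY_L2 i hiK').sub (hZ_L2 (i - 1) (by omega))).norm.integrable_sq
  have hd_int : Integrable d μ := ((hY_L2 (i + 1) hiK).sub (hY_L2 i hiK')).norm.integrable_sq
  have hf_avg : ∫ ω, s.indicator f ω ∂μ = (1 - q) * ∫ ω, f ω ∂μ := by
    rw [integral_indicator (hξ_le s hs),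
      (hξ_indep i hi hiK').setIntegral_eq_measureReal_mul hξ_le (H.le i) hs hf_meas,
      measureReal_setOf_eq_false (hξ_set i hi hiK') hq0.le (hξ_law i hi hiK')]
  have hcoef_f : (1 + q / 2) * (1 - q) ≤ 1 - q / 2 := by nlinarith
  have hcoef_d : 1 + (q / 2)⁻¹ ≤ 3 / q := by
    rw [inv_div, le_div_iff₀ hq0, add_mul, div_mul_cancel₀ _ hq0.ne']
    linarith
  calc ∫ ω, ‖Y (i + 1) ω - Z i ω‖ ^ 2 ∂μ
      ≤ ∫ ω, (1 + (q / 2)⁻¹) * d ω + (1 + q / 2) * s.indicator f ω ∂μ :=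
        integral_mono ((hY_L2 (i + 1) hiK).sub (hZ_L2 i hiK')).norm.integrable_sq
          ((hd_int.const_mul _).add ((hf_int.indicator (hξ_le s hs)).const_mul _))
          (hZ.norm_sub_sq_le hi hiK' (by positivity))
    _ = (1 + q / 2) * (1 - q) * ∫ ω, f ω ∂μ + (1 + (q / 2)⁻¹) * ∫ ω, d ω ∂μ := by
        rw [integral_add (hd_int.const_mul _) ((hf_int.indicator (hξ_le s hs)).const_mul _),
          integral_const_mul, integral_const_mul, hf_avg]
        ring
    _ ≤ (1 - q / 2) * ∫ ω, f ω ∂μ + (3 / q) * ∫ ω, d ω ∂μ := by gcongr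

end IsLazyRefresh

end LazyRefresh

/-- Variance bound for the lazily refreshed operator estimates of the Randomized
Extrapolated Method: the discrepancy between the current value and the stored
estimate is controlled by a geometrically weighted sum of one-step differences. -/
theorem stmt3 {Ω : Type*} (m0 : MeasurableSpace Ω) (μ : Measure Ω) [IsProbabilityMeasure μ]
    (H : Filtration ℕ m0)
    (V : Type*) [NormedAddCommGroup V] [NormedSpace ℝ V] [FiniteDimensional ℝ V]
    [MeasurableSpace V] [BorelSpace V]
    (q : ℝ) (hq : q ∈ Set.Ioc (0 : ℝ) 1)
    (K : ℕ) (Y : ℕ → Ω → V)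
    (hY_meas : ∀ i, i ≤ K → Measurable[H i] (Y i))
    (hY_L2 : ∀ i, i ≤ K → MemLp (Y i) 2 μ)
    (ξ : ℕ → Ω → Bool)
    (hξ_law : ∀ i, 1 ≤ i → i ≤ K → μ {ω | ξ i ω = true} = ENNReal.ofReal q)
    (hξ_indep : ∀ i, 1 ≤ i → i ≤ K → Indep (MeasurableSpace.comap (ξ i) ⊤) (H i) μ)
    (hξ_meas : ∀ i, 1 ≤ i → i ≤ K → Measurable[H (i + 1)] (ξ i))
    (Z : ℕ → Ω → V) (hZ0 : Z 0 = Y 0)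
    (hZ : ∀ i, 1 ≤ i → i ≤ K → ∀ ω, Z i ω = if ξ i ω = true then Y i ω else Z (i - 1) ω) :
    ∀ i, 1 ≤ i → i ≤ K →
      ∫ ω, ‖Y i ω - Z (i - 1) ω‖ ^ 2 ∂μ ≤
        (5 / q) * ∑ i' ∈ Finset.Icc 1 i,
          (1 - q / 2) ^ (i - i') * ∫ ω, ‖Y i' ω - Y (i' - 1) ω‖ ^ 2 ∂μ := by
  have hlazy : IsLazyRefresh Y ξ K Z := ⟨hZ0, hZ⟩
  obtain ⟨hq0, hq1⟩ := hq
  have hd_nonneg (j : ℕ) : 0 ≤ ∫ ω, ‖Y j ω - Y (j - 1) ω‖ ^ 2 ∂μ :=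
    integral_nonneg fun ω => sq_nonneg _
  refine le_mul_sum_pow_of_le_mul_add (by linarith) ?_ fun i hi hiK => ?_
  · rw [Nat.sub_self, hZ0]
    exact le_mul_of_one_le_left (hd_nonneg 1) ((one_le_div hq0).mpr (by linarith))
  · have h35 : 3 / q ≤ 5 / q := by gcongr; norm_num
    calc _ ≤ _ :=
          hlazy.integral_norm_sub_sq_le ⟨hq0, hq1⟩ hY_meas hY_L2 hξ_law hξ_indep hξ_meas hi hiK
      _ ≤ _ := add_le_add le_rfl (mul_le_mul_of_nonneg_right h35 (hd_nonneg (i + 1)))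
end

section
/- Let (Ω, 𝔽, P) be a probability space with a filtration (H_i)_{i≥0}, let V be a finite-dimensional real normed vector space, and let q ∈ (0, 1]. Let Y_0, Y_1, …, Y_K be square-integrable V-valued random vectors with Y_i measurable with respect to H_i, let ξ_1, …, ξ_K be {0,1}-valued random variables with P(ξ_i = 1) = q, ξ_i independent of H_i and H_{i+1}-measurable, and define Z_0 = Y_0 and Z_i = Y_i if ξ_i = 1, Z_i = Z_{i−1} otherwise. Then for every 2 ≤ i ≤ K: E[‖Y_i − Z_{i−1}‖²] ≤ (5/q) E[‖Y_i − Y_{i−1}‖²] + (1 − q/2) E[‖Y_{i−1} − Z_{i−2}‖²]. -/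
/-!
Young's inequality with parameter `β = q / 4` splits `Y_i - Z_{i-1}` through `Y_{i-1}`. Since the
coin `ξ_{i-1}` is independent of `H_{i-1}`, with respect to which both `Y_{i-1}` and `Z_{i-2}` are
measurable, refreshing contracts the second term by the factor `P(ξ_{i-1} = 0) = 1 - q`, and
`(1 + 4 / q, (1 + q / 4)(1 - q)) ≤ (5 / q, 1 - q / 2)` for `q ∈ (0, 1]`.
-/

open MeasureTheory ProbabilityTheory

lemma add_sq_le_young {β : ℝ} (hβ : 0 < β) (a b : ℝ) :
    (a + b) ^ 2 ≤ (1 + β⁻¹) * a ^ 2 + (1 + β) * b ^ 2 := by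
  have key : β * ((1 + β⁻¹) * a ^ 2 + (1 + β) * b ^ 2 - (a + b) ^ 2) = (a - β * b) ^ 2 := by
    field_simp
    ring
  nlinarith [sq_nonneg (a - β * b)]

lemma norm_sub_sq_le_young {E : Type*} [SeminormedAddCommGroup E] {β : ℝ} (hβ : 0 < β)
    (x y z : E) : ‖x - z‖ ^ 2 ≤ (1 + β⁻¹) * ‖x - y‖ ^ 2 + (1 + β) * ‖y - z‖ ^ 2 :=
  calc ‖x - z‖ ^ 2 ≤ (‖x - y‖ + ‖y - z‖) ^ 2 := by
        gcongr
        exact norm_sub_le_norm_sub_add_norm_sub x y z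
    _ ≤ _ := add_sq_le_young hβ _ _

section Integral

variable {Ω E : Type*} {m0 : MeasurableSpace Ω} {μ : Measure Ω} [NormedAddCommGroup E]

lemma MeasureTheory.MemLp.integrable_norm_sub_sq {f g : Ω → E} (hf : MemLp f 2 μ)
    (hg : MemLp g 2 μ) :
    Integrable (fun ω => ‖f ω - g ω‖ ^ 2) μ :=
  (hf.sub hg).integrable_norm_pow two_ne_zero

lemma integral_norm_sub_sq_le_young {β : ℝ} (hβ : 0 < β) {f g h : Ω → E}
    (hf : MemLp f 2 μ) (hg : MemLp g 2 μ) (hh : MemLp h 2 μ) :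
    ∫ ω, ‖f ω - h ω‖ ^ 2 ∂μ ≤
      (1 + β⁻¹) * ∫ ω, ‖f ω - g ω‖ ^ 2 ∂μ + (1 + β) * ∫ ω, ‖g ω - h ω‖ ^ 2 ∂μ := by
  have hfg := (hf.integrable_norm_sub_sq hg).const_mul (1 + β⁻¹)
  have hgh := (hg.integrable_norm_sub_sq hh).const_mul (1 + β)
  rw [← integral_const_mul, ← integral_const_mul, ← integral_add hfg hgh]
  exact integral_mono (hf.integrable_norm_sub_sq hh) (hfg.add hgh)
    fun ω => norm_sub_sq_le_young hβ (f ω) (g ω) (h ω)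

end Integral

lemma integral_ite_zero_of_indep {Ω : Type*} {m m0 : MeasurableSpace Ω} {μ : Measure Ω}
    [IsProbabilityMeasure μ] {b : Ω → Bool} {f : Ω → ℝ} (hb : Measurable b)
    (hf : Measurable[m] f) (hfi : Integrable f μ)
    (hindep : Indep (MeasurableSpace.comap b ⊤) m μ) :
    ∫ ω, (if b ω then 0 else f ω) ∂μ = (1 - μ.real {ω | b ω = true}) * ∫ ω, f ω ∂μ := by
  set g : Bool → ℝ := fun c => if c then 0 else 1
  have hbf : IndepFun b f μ := by
    rw [IndepFun_iff_Indep]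
    exact indep_of_indep_of_le_right hindep hf.comap_le
  have hg : (fun ω => g (b ω)) = {ω | b ω = true}ᶜ.indicator 1 := by
    ext ω
    by_cases h : b ω <;> simp [g, h]
  have hs : MeasurableSet {ω | b ω = true} := hb (measurableSet_singleton true)
  calc ∫ ω, (if b ω then 0 else f ω) ∂μ = ∫ ω, g (b ω) * f ω ∂μ := by
        congr 1
        ext ω
        by_cases h : b ω <;> simp [g, h]
    _ = (∫ ω, g (b ω) ∂μ) * ∫ ω, f ω ∂μ :=
        (hbf.comp (measurable_of_countable g) measurable_id).integral_fun_mul_eq_mul_integral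
          ((measurable_of_countable g).comp hb).aestronglyMeasurable hfi.aestronglyMeasurable
    _ = (1 - μ.real {ω | b ω = true}) * ∫ ω, f ω ∂μ := by
        rw [hg, integral_indicator_one hs.compl, probReal_compl_eq_one_sub hs]

lemma integral_norm_sub_refresh_sq {Ω V : Type*} {m m0 : MeasurableSpace Ω} {μ : Measure Ω}
    [IsProbabilityMeasure μ] [NormedAddCommGroup V] [SecondCountableTopology V]
    [MeasurableSpace V] [BorelSpace V] {b : Ω → Bool} {y z z' : Ω → V} (hb : Measurable b)
    (hindep : Indep (MeasurableSpace.comap b ⊤) m μ) (hy : Measurable[m] y)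
    (hz : Measurable[m] z) (hy_L2 : MemLp y 2 μ) (hz_L2 : MemLp z 2 μ)
    (hz' : ∀ ω, z' ω = if b ω then y ω else z ω) :
    ∫ ω, ‖y ω - z' ω‖ ^ 2 ∂μ = (1 - μ.real {ω | b ω = true}) * ∫ ω, ‖y ω - z ω‖ ^ 2 ∂μ := by
  have hdist : Measurable[m] fun ω => ‖y ω - z ω‖ ^ 2 := by fun_prop
  rw [← integral_ite_zero_of_indep hb hdist (hy_L2.integrable_norm_sub_sq hz_L2) hindep]
  congr 1
  ext ω
  rw [hz' ω]
  split_ifs <;> simp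

section LazyRefresh

variable {Ω V : Type*} {m0 : MeasurableSpace Ω} {K : ℕ} {Y Z : ℕ → Ω → V} {ξ : ℕ → Ω → Bool}

lemma lazy_succ_eq_piecewise
    (hZ : ∀ i, 1 ≤ i → i ≤ K → ∀ ω, Z i ω = if ξ i ω = true then Y i ω else Z (i - 1) ω)
    {n : ℕ} (hn : n + 1 ≤ K) :
    Z (n + 1) = {ω | ξ (n + 1) ω = true}.piecewise (Y (n + 1)) (Z n) := by
  ext ω
  exact hZ (n + 1) (Nat.le_add_left 1 n) hn ω

lemma measurable_lazy [MeasurableSpace V] {H : Filtration ℕ m0}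
    (hY_meas : ∀ i, i ≤ K → Measurable[H i] (Y i))
    (hξ_meas : ∀ i, 1 ≤ i → i ≤ K → Measurable[H (i + 1)] (ξ i)) (hZ0 : Z 0 = Y 0)
    (hZ : ∀ i, 1 ≤ i → i ≤ K → ∀ ω, Z i ω = if ξ i ω = true then Y i ω else Z (i - 1) ω) :
    ∀ j, j ≤ K → Measurable[H (j + 1)] (Z j)
  | 0, _ => hZ0 ▸ (hY_meas 0 (Nat.zero_le K)).mono (H.mono zero_le_one) le_rfl
  | n + 1, hn => by
    rw [lazy_succ_eq_piecewise hZ hn]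
    refine Measurable.piecewise
      (hξ_meas (n + 1) (Nat.le_add_left 1 n) hn (measurableSet_singleton true)) ?_ ?_
    · exact (hY_meas (n + 1) hn).mono (H.mono n.succ.le_succ) le_rfl
    · exact (measurable_lazy hY_meas hξ_meas hZ0 hZ n (by omega)).mono
        (H.mono n.succ.le_succ) le_rfl

lemma memLp_lazy [NormedAddCommGroup V] {μ : Measure Ω}
    (hY_L2 : ∀ i, i ≤ K → MemLp (Y i) 2 μ)
    (hξ_meas : ∀ i, 1 ≤ i → i ≤ K → Measurable (ξ i)) (hZ0 : Z 0 = Y 0)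
    (hZ : ∀ i, 1 ≤ i → i ≤ K → ∀ ω, Z i ω = if ξ i ω = true then Y i ω else Z (i - 1) ω) :
    ∀ j, j ≤ K → MemLp (Z j) 2 μ
  | 0, _ => hZ0 ▸ hY_L2 0 (Nat.zero_le K)
  | n + 1, hn => by
    rw [lazy_succ_eq_piecewise hZ hn]
    exact MemLp.piecewise
      (hξ_meas (n + 1) (Nat.le_add_left 1 n) hn (measurableSet_singleton true))
      ((hY_L2 (n + 1) hn).restrict _) ((memLp_lazy hY_L2 hξ_meas hZ0 hZ n (by omega)).restrict _)

end LazyRefresh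

/-- One-step recursive variance inequality for the lazily refreshed operator
estimates of the Randomized Extrapolated Method. -/
theorem stmt4 {Ω : Type*} (m0 : MeasurableSpace Ω) (μ : Measure Ω) [IsProbabilityMeasure μ]
    (H : Filtration ℕ m0)
    (V : Type*) [NormedAddCommGroup V] [NormedSpace ℝ V] [FiniteDimensional ℝ V]
    [MeasurableSpace V] [BorelSpace V]
    (q : ℝ) (hq : q ∈ Set.Ioc (0 : ℝ) 1)
    (K : ℕ) (Y : ℕ → Ω → V)
    (hY_meas : ∀ i, i ≤ K → Measurable[H i] (Y i))
    (hY_L2 : ∀ i, i ≤ K → MemLp (Y i) 2 μ)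
    (ξ : ℕ → Ω → Bool)
    (hξ_law : ∀ i, 1 ≤ i → i ≤ K → μ {ω | ξ i ω = true} = ENNReal.ofReal q)
    (hξ_indep : ∀ i, 1 ≤ i → i ≤ K → Indep (MeasurableSpace.comap (ξ i) ⊤) (H i) μ)
    (hξ_meas : ∀ i, 1 ≤ i → i ≤ K → Measurable[H (i + 1)] (ξ i))
    (Z : ℕ → Ω → V) (hZ0 : Z 0 = Y 0)
    (hZ : ∀ i, 1 ≤ i → i ≤ K → ∀ ω, Z i ω = if ξ i ω = true then Y i ω else Z (i - 1) ω) :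
    ∀ i, 2 ≤ i → i ≤ K →
      ∫ ω, ‖Y i ω - Z (i - 1) ω‖ ^ 2 ∂μ ≤
        (5 / q) * ∫ ω, ‖Y i ω - Y (i - 1) ω‖ ^ 2 ∂μ
          + (1 - q / 2) * ∫ ω, ‖Y (i - 1) ω - Z (i - 2) ω‖ ^ 2 ∂μ := by
  obtain ⟨hq0, hq1⟩ := hq
  intro i hi2 hiK
  obtain ⟨j, rfl⟩ : ∃ j, i = j + 2 := ⟨i - 2, by omega⟩
  rw [show j + 2 - 1 = j + 1 by omega, Nat.add_sub_cancel]
  have hξ_meas' : ∀ i, 1 ≤ i → i ≤ K → Measurable (ξ i) := fun i hi hiK =>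
    (hξ_meas i hi hiK).mono (H.le _) le_rfl
  have hZ_L2 := memLp_lazy hY_L2 hξ_meas' hZ0 hZ
  have hlaw : μ.real {ω | ξ (j + 1) ω = true} = q := by
    rw [measureReal_def, hξ_law (j + 1) (by omega) (by omega), ENNReal.toReal_ofReal hq0.le]
  have hrefresh := hlaw ▸ integral_norm_sub_refresh_sq (hξ_meas' (j + 1) (by omega) (by omega))
    (hξ_indep (j + 1) (by omega) (by omega)) (hY_meas (j + 1) (by omega))
    (measurable_lazy hY_meas hξ_meas hZ0 hZ j (by omega)) (hY_L2 (j + 1) (by omega))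
    (hZ_L2 j (by omega)) (by simpa using hZ (j + 1) (by omega) (by omega))
  have hcoeff₁ : 1 + (q / 4)⁻¹ ≤ 5 / q := by
    calc 1 + (q / 4)⁻¹ = (q + 4) / q := by field_simp
      _ ≤ 5 / q := by gcongr; linarith
  have hcoeff₂ : (1 + q / 4) * (1 - q) ≤ 1 - q / 2 := by nlinarith
  calc ∫ ω, ‖Y (j + 2) ω - Z (j + 1) ω‖ ^ 2 ∂μ
      ≤ (1 + (q / 4)⁻¹) * ∫ ω, ‖Y (j + 2) ω - Y (j + 1) ω‖ ^ 2 ∂μ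
          + (1 + q / 4) * ∫ ω, ‖Y (j + 1) ω - Z (j + 1) ω‖ ^ 2 ∂μ :=
        integral_norm_sub_sq_le_young (by positivity) (hY_L2 _ hiK) (hY_L2 _ (by omega))
          (hZ_L2 _ (by omega))
    _ = (1 + (q / 4)⁻¹) * ∫ ω, ‖Y (j + 2) ω - Y (j + 1) ω‖ ^ 2 ∂μ
          + (1 + q / 4) * (1 - q) * ∫ ω, ‖Y (j + 1) ω - Z j ω‖ ^ 2 ∂μ := by
        rw [hrefresh, mul_assoc]
    _ ≤ _ := by gcongr
end

section
/- Let L > 0, γ > 0 and q* ∈ (0, 1]. Set α := min{ q*/11, γ/(10 L) }, A_0 := 0, A_1 := sqrt(2/3)/(10 L), A_k := A_1 (1 + α)^{k−1} for k ≥ 1, and a_k := A_k − A_{k−1} for k ≥ 1. Then for all k ≥ 2: a_k²/(A_k γ + 1) ≤ (1 + q*/5) a_{k−1}²/(A_{k−1} γ + 1) and 25 L² a_{k−1}²/(A_{k−1} γ + 1) ≤ (A_{k−2} γ + 1)/4. Consequently, A_k ≥ (1/(10 L)) · sqrt(2/3) · (1 + min{ q*/11, γ/(10 L) })^{k−1}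 for all k ≥ 1. -/
/-!
After the first step the sequence `A_k` is geometric with ratio `r = 1 + α`, so the increments
satisfy `a_{k+1} = α A_k` and `a_{k+1} ≤ r a_k`. The first condition then follows from
`r² ≤ 1 + q*/5`, a consequence of `α ≤ q*/11 ≤ 1/11`, and the monotonicity of `A`; the second from
`10 L α ≤ γ`, except at the first step, where it is the choice `(10 L A_1)² = 2/3`.
-/

noncomputable section

/-- With `c = √(2/3) / (10 L)` and `r = 1 + α` this is the sequence `A_k`. -/
def shiftedGeom (c r : ℝ) : ℕ → ℝ
  | 0 => 0
  | n + 1 => c * r ^ n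

namespace shiftedGeom

variable {c r : ℝ}

@[simp]
lemma zero : shiftedGeom c r 0 = 0 := rfl

@[simp]
lemma succ (n : ℕ) : shiftedGeom c r (n + 1) = c * r ^ n := rfl

lemma nonneg (hc : 0 ≤ c) (hr : 0 ≤ r) (n : ℕ) : 0 ≤ shiftedGeom c r n := by
  cases n <;> simp only [zero, succ, le_refl]; positivity

lemma le_succ (hc : 0 ≤ c) (hr : 1 ≤ r) (n : ℕ) :
    shiftedGeom c r n ≤ shiftedGeom c r (n + 1) := by
  cases n with
  | zero => simpa using hc
  | succ n =>
    simp only [succ, pow_succ, ← mul_assoc]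
    exact le_mul_of_one_le_right (by positivity) hr

lemma succ_succ (n : ℕ) : shiftedGeom c r (n + 2) = r * shiftedGeom c r (n + 1) := by
  simp only [succ, pow_succ]
  ring

lemma sub_succ_succ (n : ℕ) :
    shiftedGeom c r (n + 2) - shiftedGeom c r (n + 1) = (r - 1) * shiftedGeom c r (n + 1) := by
  rw [succ_succ]
  ring

lemma sub_succ_succ_le (hc : 0 ≤ c) (n : ℕ) :
    shiftedGeom c r (n + 2) - shiftedGeom c r (n + 1)
      ≤ r * (shiftedGeom c r (n + 1) - shiftedGeom c r n) := by
  rw [sub_succ_succ]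
  cases n with
  | zero => simp only [succ, zero, pow_zero, mul_one, sub_zero]; linarith
  | succ n => exact le_of_eq (by rw [sub_succ_succ, succ_succ]; ring)

lemma sq_sub_div_le (hc : 0 ≤ c) (hr : 1 ≤ r) {γ s : ℝ} (hγ : 0 ≤ γ) (hrs : r ^ 2 ≤ s)
    (n : ℕ) :
    (shiftedGeom c r (n + 2) - shiftedGeom c r (n + 1)) ^ 2 / (shiftedGeom c r (n + 2) * γ + 1)
      ≤ s * ((shiftedGeom c r (n + 1) - shiftedGeom c r n) ^ 2
        / (shiftedGeom c r (n + 1) * γ + 1)) := by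
  have hA : ∀ n, 0 ≤ shiftedGeom c r n := nonneg hc (by linarith)
  have hmono : ∀ n, shiftedGeom c r n ≤ shiftedGeom c r (n + 1) := le_succ hc hr
  have hnum : (shiftedGeom c r (n + 2) - shiftedGeom c r (n + 1)) ^ 2
      ≤ s * (shiftedGeom c r (n + 1) - shiftedGeom c r n) ^ 2 :=
    calc _ ≤ (r * (shiftedGeom c r (n + 1) - shiftedGeom c r n)) ^ 2 :=
          pow_le_pow_left₀ (by linarith [hmono (n + 1)]) (sub_succ_succ_le hc n) 2
      _ = r ^ 2 * (shiftedGeom c r (n + 1) - shiftedGeom c r n) ^ 2 := by ring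
      _ ≤ _ := by gcongr
  rw [← mul_div_assoc]
  exact div_le_div₀ (by nlinarith) hnum (by nlinarith [hA (n + 1)])
    (by nlinarith [hmono (n + 1)])

lemma sq_sub_div_le_quarter (hc : 0 ≤ c) (hr : 1 ≤ r) {L γ : ℝ} (hL : 0 ≤ L) (hγ : 0 ≤ γ)
    (hLc : (10 * L * c) ^ 2 ≤ 1) (hLr : 10 * L * (r - 1) ≤ γ) (n : ℕ) :
    25 * L ^ 2 * (shiftedGeom c r (n + 1) - shiftedGeom c r n) ^ 2
        / (shiftedGeom c r (n + 1) * γ + 1)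
      ≤ (shiftedGeom c r n * γ + 1) / 4 := by
  have hA : ∀ n, 0 ≤ shiftedGeom c r n := nonneg hc (by linarith)
  have hden : 0 < shiftedGeom c r (n + 1) * γ + 1 := by nlinarith [hA (n + 1)]
  rw [div_le_iff₀ hden]
  cases n with
  | zero =>
    simp only [succ, zero, pow_zero, mul_one, sub_zero, zero_mul, zero_add]
    nlinarith [mul_nonneg hc hγ]
  | succ n =>
    set B := shiftedGeom c r (n + 1)
    have hB : B ≤ shiftedGeom c r (n + 2) := le_succ hc hr (n + 1)
    have hstep : (10 * L * (r - 1)) ^ 2 ≤ γ ^ 2 :=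
      pow_le_pow_left₀ (mul_nonneg (by positivity) (by linarith)) hLr 2
    rw [sub_succ_succ]
    calc 25 * L ^ 2 * ((r - 1) * B) ^ 2 = (10 * L * (r - 1)) ^ 2 * B ^ 2 / 4 := by ring
      _ ≤ γ ^ 2 * B ^ 2 / 4 := by gcongr
      _ ≤ _ := by nlinarith [mul_nonneg (hA (n + 1)) hγ, mul_le_mul_of_nonneg_right hB hγ]

end shiftedGeom

lemma sq_one_add_le_one_add_div_five {α q : ℝ} (hα : 0 ≤ α) (hαq : α ≤ q / 11) (hq : q ≤ 1) :
    (1 + α) ^ 2 ≤ 1 + q / 5 := by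
  nlinarith

/-- Step-size feasibility conditions of the main convergence theorem for the
Randomized Extrapolated Method in the strongly monotone case (γ > 0), together with
the resulting geometric growth of the sequence A_k. -/
theorem stmt8 (L γ qstar : ℝ) (hL : 0 < L) (hγ : 0 < γ) (hqstar : qstar ∈ Set.Ioc (0 : ℝ) 1)
    (α : ℝ) (hα : α = min (qstar / 11) (γ / (10 * L)))
    (A : ℕ → ℝ) (hA0 : A 0 = 0)
    (hA : ∀ k : ℕ, 1 ≤ k → A k = Real.sqrt (2 / 3) / (10 * L) * (1 + α) ^ (k - 1))
    (a : ℕ → ℝ) (ha : ∀ k : ℕ, 1 ≤ k → a k = A k - A (k - 1)) :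
    (∀ k : ℕ, 2 ≤ k →
      (a k) ^ 2 / (A k * γ + 1) ≤ (1 + qstar / 5) * ((a (k - 1)) ^ 2 / (A (k - 1) * γ + 1)) ∧
      25 * L ^ 2 * (a (k - 1)) ^ 2 / (A (k - 1) * γ + 1) ≤ (A (k - 2) * γ + 1) / 4) ∧
    (∀ k : ℕ, 1 ≤ k →
      (1 / (10 * L)) * Real.sqrt (2 / 3) * (1 + min (qstar / 11) (γ / (10 * L))) ^ (k - 1)
        ≤ A k) := by
  obtain ⟨hq0, hq1⟩ := hqstar
  set c := Real.sqrt (2 / 3) / (10 * L) with hc_def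
  have hAc : A = shiftedGeom c (1 + α) := funext fun
    | 0 => hA0
    | n + 1 => hA (n + 1) n.succ_pos
  have hα0 : 0 ≤ α := hα ▸ le_min (by positivity) (by positivity)
  have hαq : α ≤ qstar / 11 := hα ▸ min_le_left _ _
  have hαγ : 10 * L * α ≤ γ := by
    have := hα ▸ min_le_right (qstar / 11) (γ / (10 * L))
    rwa [le_div_iff₀ (by positivity), mul_comm] at this
  have hc : 0 ≤ c := by positivity
  have hLc : (10 * L * c) ^ 2 ≤ 1 := by
    rw [hc_def, mul_div_cancel₀ _ (by positivity), Real.sq_sqrt (by norm_num)]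
    norm_num
  have ha' (n : ℕ) : a (n + 1) = A (n + 1) - A n := by simpa using ha (n + 1) n.succ_pos
  refine ⟨fun k hk => ?_, fun k hk => by rw [hA k hk, ← hα]; exact le_of_eq (by ring)⟩
  obtain ⟨n, rfl⟩ : ∃ n, k = n + 2 := ⟨k - 2, by omega⟩
  simp only [show n + 2 - 1 = n + 1 by omega, Nat.add_sub_cancel, ha', hAc]
  exact ⟨shiftedGeom.sq_sub_div_le hc (by linarith) hγ.le
      (sq_one_add_le_one_add_div_five hα0 hαq hq1) n,
    shiftedGeom.sq_sub_div_le_quarter hc (by linarith) hL.le hγ.le hLc (by simpa using hαγ) n⟩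
end
end

section
/- Let h : ℝ^d → ℝ be differentiable and 1-strongly convex with respect to the Euclidean norm, with Bregman divergence D(x,y) = h(x) − h(y) − ⟨∇h(y), x − y⟩. Let (Ω, 𝔽, P) be a probability space with filtration (F_k)_{k≥1}, and let u_1, …, u_K : Ω → ℝ^d be square-integrable random vectors such that u_k is F_{k+1}-measurable and E[u_k | F_k] = 0 for each k. Then for any fixed x_0 ∈ ℝ^d that is independent of the u_k's and any square-integrable measurable x : Ω → ℝ^d (possibly depending on the u_k's) with E[D(x, x_0)] < ∞: E[ Σ_{k=1}^K ⟨u_k, x⟩ ] ≤ E[ D(x, x_0) ] + (1/2) Σ_{k=1}^K E[ ‖u_k‖² ], where ‖·‖ is the Euclidean norm. -/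
open MeasureTheory ProbabilityTheory Finset
open scoped RealInnerProductSpace

/-! With `S = ∑ k, u k`, strong convexity of `h` at `x₀` and Young's inequality give pointwise
`⟪S, x⟫ ≤ D(x, x₀) + ½‖S‖² + ⟪x₀, S⟫`. In expectation the last term vanishes because every `u k` is
centred, and `E‖S‖² = ∑ E‖u k‖²` because martingale differences are orthogonal in `L²`: for `j < k`,
`u j` is `F k`-measurable, so `E⟪u j, u k⟫ = E⟪u j, E[u k | F k]⟫ = 0`. -/

section InnerProductSpace

variable {E : Type*} [NormedAddCommGroup E] [InnerProductSpace ℝ E]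

lemma inner_le_bregman_add_half_norm_sq {h : E → ℝ} {g x₀ y : E}
    (hsc : h x₀ + ⟪g, y - x₀⟫ + 1 / 2 * ‖y - x₀‖ ^ 2 ≤ h y) (s : E) :
    ⟪s, y⟫ ≤ (h y - h x₀ - ⟪g, y - x₀⟫) + 1 / 2 * ‖s‖ ^ 2 + ⟪x₀, s⟫ := by
  have hsplit : ⟪s, y⟫ = ⟪s, y - x₀⟫ + ⟪x₀, s⟫ := by
    rw [real_inner_comm s x₀, ← inner_add_right, sub_add_cancel]
  have hcs : ⟪s, y - x₀⟫ ≤ ‖s‖ * ‖y - x₀‖ := real_inner_le_norm _ _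
  nlinarith [sq_nonneg (‖s‖ - ‖y - x₀‖)]

variable {Ω : Type*} {m m₀ : MeasurableSpace Ω} {μ : Measure Ω}

lemma MeasureTheory.MemLp.integrable_inner {f g : Ω → E} (hf : MemLp f 2 μ) (hg : MemLp g 2 μ) :
    Integrable (fun ω ↦ ⟪f ω, g ω⟫) μ :=
  memLp_one_iff_integrable.1 <| (innerSL ℝ).memLp_of_bilin 1 hf hg

lemma integral_norm_sum_sq_of_orthogonal {ι : Type*} {s : Finset ι} {u : ι → Ω → E}
    (hu : ∀ i ∈ s, MemLp (u i) 2 μ)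
    (horth : ∀ i ∈ s, ∀ j ∈ s, i ≠ j → ∫ ω, ⟪u i ω, u j ω⟫ ∂μ = 0) :
    ∫ ω, ‖∑ i ∈ s, u i ω‖ ^ 2 ∂μ = ∑ i ∈ s, ∫ ω, ‖u i ω‖ ^ 2 ∂μ := by
  have hexpand : ∀ ω, ‖∑ i ∈ s, u i ω‖ ^ 2 = ∑ i ∈ s, ∑ j ∈ s, ⟪u i ω, u j ω⟫ := fun ω ↦ by
    simp only [← real_inner_self_eq_norm_sq, sum_inner, inner_sum]
    exact sum_comm
  simp_rw [hexpand]
  rw [integral_finsetSum _ fun i hi ↦ integrable_finsetSum _ fun j hj ↦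
    (hu i hi).integrable_inner (hu j hj)]
  refine sum_congr rfl fun i hi ↦ ?_
  rw [integral_finsetSum _ fun j hj ↦ (hu i hi).integrable_inner (hu j hj),
    sum_eq_single_of_mem i hi fun j hj hji ↦ horth i hi j hj hji.symm]
  simp only [real_inner_self_eq_norm_sq]

variable [CompleteSpace E]

lemma integral_inner_eq_zero_of_condExp_eq_zero (hm : m ≤ m₀) [SigmaFinite (μ.trim hm)]
    {f g : Ω → E} (hf : StronglyMeasurable[m] f) (hfg : Integrable (fun ω ↦ ⟪f ω, g ω⟫) μ)
    (hg : Integrable g μ) (hg₀ : μ[g | m] =ᵐ[μ] 0) :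
    ∫ ω, ⟪f ω, g ω⟫ ∂μ = 0 := by
  have hpull : μ[fun ω ↦ ⟪f ω, g ω⟫ | m] =ᵐ[μ] fun ω ↦ ⟪f ω, μ[g | m] ω⟫ :=
    condExp_bilin_of_stronglyMeasurable_left (innerSL ℝ) hf hfg hg
  rw [← integral_condExp hm, integral_congr_ae hpull]
  refine integral_eq_zero_of_ae ?_
  filter_upwards [hg₀] with ω hω
  simp [hω]

variable [IsFiniteMeasure μ]

lemma integral_inner_eq_zero_of_martingale_increments (F : Filtration ℕ m₀) {u : ℕ → Ω → E}
    {j k : ℕ} (hjk : j < k) (hj : StronglyMeasurable[F (j + 1)] (u j))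
    (hj₂ : MemLp (u j) 2 μ) (hk₂ : MemLp (u k) 2 μ) (hk₀ : μ[u k | F k] =ᵐ[μ] 0) :
    ∫ ω, ⟪u j ω, u k ω⟫ ∂μ = 0 :=
  integral_inner_eq_zero_of_condExp_eq_zero (F.le k) (hj.mono (F.mono hjk))
    (hj₂.integrable_inner hk₂) (hk₂.integrable one_le_two) hk₀

lemma integral_norm_sum_sq_of_martingale_increments (F : Filtration ℕ m₀) {u : ℕ → Ω → E}
    {s : Finset ℕ} (hu : ∀ k ∈ s, StronglyMeasurable[F (k + 1)] (u k))
    (hu₂ : ∀ k ∈ s, MemLp (u k) 2 μ) (hu₀ : ∀ k ∈ s, μ[u k | F k] =ᵐ[μ] 0) :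
    ∫ ω, ‖∑ k ∈ s, u k ω‖ ^ 2 ∂μ = ∑ k ∈ s, ∫ ω, ‖u k ω‖ ^ 2 ∂μ := by
  refine integral_norm_sum_sq_of_orthogonal hu₂ fun i hi j hj hij ↦ ?_
  rcases hij.lt_or_gt with hlt | hgt
  · exact integral_inner_eq_zero_of_martingale_increments F hlt (hu i hi) (hu₂ i hi) (hu₂ j hj)
      (hu₀ j hj)
  · rw [integral_congr_ae (ae_of_all _ fun ω ↦ real_inner_comm (u j ω) (u i ω))]
    exact integral_inner_eq_zero_of_martingale_increments F hgt (hu j hj) (hu₂ j hj) (hu₂ i hi)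
      (hu₀ i hi)

lemma integral_sum_eq_zero_of_condExp_eq_zero (F : Filtration ℕ m₀) {u : ℕ → Ω → E}
    {s : Finset ℕ} (hu : ∀ k ∈ s, Integrable (u k) μ) (hu₀ : ∀ k ∈ s, μ[u k | F k] =ᵐ[μ] 0) :
    ∫ ω, ∑ k ∈ s, u k ω ∂μ = 0 := by
  rw [integral_finsetSum _ hu]
  refine sum_eq_zero fun k hk ↦ ?_
  rw [← integral_condExp (F.le k), integral_congr_ae (hu₀ k hk)]
  simp

end InnerProductSpace

theorem stmt11_general {Ω : Type*} (m0 : MeasurableSpace Ω) (μ : Measure Ω) [IsProbabilityMeasure μ]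
    (d : ℕ)
    (h : EuclideanSpace ℝ (Fin d) → ℝ)
    (h' : EuclideanSpace ℝ (Fin d) → EuclideanSpace ℝ (Fin d))
    (hh_sconv : ∀ x y : EuclideanSpace ℝ (Fin d),
      h x + ⟪h' x, y - x⟫ + (1 / 2) * ‖y - x‖ ^ 2 ≤ h y)
    (F : Filtration ℕ m0)
    (K : ℕ) (u : ℕ → Ω → EuclideanSpace ℝ (Fin d))
    (hu_meas : ∀ k, 1 ≤ k → k ≤ K → Measurable[F (k + 1)] (u k))
    (hu_L2 : ∀ k, 1 ≤ k → k ≤ K → MemLp (u k) 2 μ)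
    (hu_mean : ∀ k, 1 ≤ k → k ≤ K → μ[u k | F k] =ᵐ[μ] 0)
    (x0 : EuclideanSpace ℝ (Fin d))
    (x : Ω → EuclideanSpace ℝ (Fin d)) (hx_L2 : MemLp x 2 μ)
    (hx_D_int : Integrable (fun ω => h (x ω) - h x0 - ⟪h' x0, x ω - x0⟫) μ) :
    ∫ ω, ∑ k ∈ Finset.Icc 1 K, ⟪u k ω, x ω⟫ ∂μ ≤
      (∫ ω, (h (x ω) - h x0 - ⟪h' x0, x ω - x0⟫) ∂μ)
        + (1 / 2) * ∑ k ∈ Finset.Icc 1 K, ∫ ω, ‖u k ω‖ ^ 2 ∂μ := by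
  have hu : ∀ k ∈ Icc 1 K, StronglyMeasurable[F (k + 1)] (u k) := fun k hk ↦
    (hu_meas k (mem_Icc.1 hk).1 (mem_Icc.1 hk).2).stronglyMeasurable
  have hu₂ : ∀ k ∈ Icc 1 K, MemLp (u k) 2 μ := fun k hk ↦ hu_L2 k (mem_Icc.1 hk).1 (mem_Icc.1 hk).2
  have hu₀ : ∀ k ∈ Icc 1 K, μ[u k | F k] =ᵐ[μ] 0 := fun k hk ↦
    hu_mean k (mem_Icc.1 hk).1 (mem_Icc.1 hk).2
  set S := fun ω ↦ ∑ k ∈ Icc 1 K, u k ω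
  have hS₂ : MemLp S 2 μ := memLp_finsetSum _ hu₂
  have hS_sq : Integrable (fun ω ↦ 1 / 2 * ‖S ω‖ ^ 2) μ :=
    (hS₂.integrable_norm_pow two_ne_zero).const_mul _
  have hDS : Integrable (fun ω ↦ (h (x ω) - h x0 - ⟪h' x0, x ω - x0⟫) + 1 / 2 * ‖S ω‖ ^ 2) μ :=
    hx_D_int.add hS_sq
  have hS_x0 : Integrable (fun ω ↦ ⟪x0, S ω⟫) μ := (hS₂.integrable one_le_two).const_inner x0
  calc ∫ ω, ∑ k ∈ Icc 1 K, ⟪u k ω, x ω⟫ ∂μ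
      ≤ ∫ ω, (h (x ω) - h x0 - ⟪h' x0, x ω - x0⟫) + 1 / 2 * ‖S ω‖ ^ 2 + ⟪x0, S ω⟫ ∂μ := by
        refine integral_mono (integrable_finsetSum _ fun k hk ↦ (hu₂ k hk).integrable_inner hx_L2)
          (hDS.add hS_x0) fun ω ↦ ?_
        rw [← sum_inner]
        exact inner_le_bregman_add_half_norm_sq (hh_sconv x0 (x ω)) _
    _ = (∫ ω, (h (x ω) - h x0 - ⟪h' x0, x ω - x0⟫) ∂μ) + 1 / 2 * ∫ ω, ‖S ω‖ ^ 2 ∂μ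
          + ⟪x0, ∫ ω, S ω ∂μ⟫ := by
        rw [integral_add hDS hS_x0, integral_add hx_D_int hS_sq,
          integral_const_mul, integral_inner (hS₂.integrable one_le_two)]
    _ = _ := by
        rw [integral_norm_sum_sq_of_martingale_increments F hu hu₂ hu₀,
          integral_sum_eq_zero_of_condExp_eq_zero F (fun k hk ↦ (hu₂ k hk).integrable one_le_two)
            hu₀, inner_zero_right, add_zero]

/-- Bound on the expected inner product of a sum of martingale-difference vectors
with a possibly dependent comparison vector x, via the Bregman divergence of a
1-strongly convex (w.r.t. the Euclidean norm) function h. -/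
theorem stmt11 {Ω : Type*} (m0 : MeasurableSpace Ω) (μ : Measure Ω) [IsProbabilityMeasure μ]
    (d : ℕ)
    (h : EuclideanSpace ℝ (Fin d) → ℝ)
    (h' : EuclideanSpace ℝ (Fin d) → EuclideanSpace ℝ (Fin d))
    (hh_diff : ∀ x, HasGradientAt h (h' x) x)
    (hh_sconv : ∀ x y : EuclideanSpace ℝ (Fin d),
      h x + ⟪h' x, y - x⟫ + (1 / 2) * ‖y - x‖ ^ 2 ≤ h y)
    (F : Filtration ℕ m0)
    (K : ℕ) (u : ℕ → Ω → EuclideanSpace ℝ (Fin d))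
    (hu_meas : ∀ k, 1 ≤ k → k ≤ K → Measurable[F (k + 1)] (u k))
    (hu_L2 : ∀ k, 1 ≤ k → k ≤ K → MemLp (u k) 2 μ)
    (hu_mean : ∀ k, 1 ≤ k → k ≤ K → μ[u k | F k] =ᵐ[μ] 0)
    (x0 : EuclideanSpace ℝ (Fin d))
    (x : Ω → EuclideanSpace ℝ (Fin d)) (hx_meas : Measurable x) (hx_L2 : MemLp x 2 μ)
    (hx_D_int : Integrable (fun ω => h (x ω) - h x0 - ⟪h' x0, x ω - x0⟫) μ) :
    ∫ ω, ∑ k ∈ Finset.Icc 1 K, ⟪u k ω, x ω⟫ ∂μ ≤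
      (∫ ω, (h (x ω) - h x0 - ⟪h' x0, x ω - x0⟫) ∂μ)
        + (1 / 2) * ∑ k ∈ Finset.Icc 1 K, ∫ ω, ‖u k ω‖ ^ 2 ∂μ :=
  stmt11_general m0 μ d h h' hh_sconv F K u hu_meas hu_L2 hu_mean x0 x hx_L2 hx_D_int
end

section
/- Let A ∈ ℝ^{n×d} have no zero row, let ρ_j = ‖A_{j:}‖_∞ = max_{1≤i≤d} |A_{ji}| > 0 for j ∈ {1,…,n}, and define p_j = sqrt(ρ_j) / Σ_{l=1}^n sqrt(ρ_l). Then for all y, ŷ ∈ ℝ^n and z, ẑ ∈ ℝ^d: Σ_{j=1}^n (ρ_j²/p_j³) (y_j − ŷ_j)² + Σ_{j=1}^n (1/p_j³) ( A_{j:}ᵀ(z − ẑ) )² ≤ ‖ρ‖_{1/2} ² ( ‖y − ŷ‖_2² + ‖z − ẑ‖_1² ), where ‖ρ‖_{1/2} = ( Σ_{j=1}^n sqrt(ρ_j) )² and A_{j:} denotes the j-th row of A. -/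
open Finset

noncomputable section

/- With `S = ∑ l, √ρ l`, both weights collapse to the same coefficient
`ρ_j² / p_j³ = √ρ_j · S³`, and Hölder bounds `(A_{j:}ᵀ w)²` by `ρ_j² ‖w‖₁²`. Summing, every term
is at most `√ρ_j · S³` times the corresponding norm, and `∑ √ρ_j · S³ = S⁴`, using `√ρ_j ≤ S`
for the first sum. -/

section LinearOrderedRing

variable {R : Type*} [CommRing R] [LinearOrder R] [IsStrictOrderedRing R]

theorem abs_sum_mul_le_mul_sum_abs {ι : Type*} (s : Finset ι) {a w : ι → R} {c : R}
    (ha : ∀ i ∈ s, |a i| ≤ c) : |∑ i ∈ s, a i * w i| ≤ c * ∑ i ∈ s, |w i| :=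
  calc |∑ i ∈ s, a i * w i| ≤ ∑ i ∈ s, |a i| * |w i| := by
        simpa only [abs_mul] using abs_sum_le_sum_abs (fun i => a i * w i) s
    _ ≤ ∑ i ∈ s, c * |w i| := sum_le_sum fun i hi => by gcongr; exact ha i hi
    _ = c * ∑ i ∈ s, |w i| := (mul_sum ..).symm

theorem sq_sum_mul_le_of_isGreatest {κ : Type*} [Fintype κ] {a w : κ → R} {r : R}
    (hr : IsGreatest (Set.range fun i => |a i|) r) :
    (∑ i, a i * w i) ^ 2 ≤ r ^ 2 * (∑ i, |w i|) ^ 2 := by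
  have hbound := abs_sum_mul_le_mul_sum_abs univ (w := w) fun i _ => hr.2 ⟨i, rfl⟩
  rw [← mul_pow, ← sq_abs]
  exact pow_le_pow_left₀ (abs_nonneg _) hbound 2

theorem sum_mul_le_sum_mul_sum {ι : Type*} (s : Finset ι) {w c : ι → R}
    (hw : ∀ i ∈ s, 0 ≤ w i) (hc : ∀ i ∈ s, 0 ≤ c i) :
    ∑ i ∈ s, w i * c i ≤ (∑ i ∈ s, w i) * ∑ i ∈ s, c i := by
  rw [mul_sum]
  exact sum_le_sum fun i hi => by gcongr; exacts [hc i hi, single_le_sum hw hi]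

end LinearOrderedRing

theorem sq_div_sqrt_div_pow_three {r : ℝ} (hr : 0 ≤ r) (S : ℝ) :
    r ^ 2 / (√r / S) ^ 3 = √r * S ^ 3 := by
  rcases (Real.sqrt_nonneg r).eq_or_lt with h | h
  · rw [← h, Real.sqrt_eq_zero hr |>.mp h.symm]; simp
  · rw [← Real.sq_sqrt hr, ← pow_mul, Real.sqrt_sq h.le]
    field_simp

theorem stmt17_general (n d : ℕ) (A : Matrix (Fin n) (Fin d) ℝ)
    (ρ : Fin n → ℝ) (hρ : ∀ j, IsGreatest (Set.range fun i => |A j i|) (ρ j))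
    (p : Fin n → ℝ) (hp : ∀ j, p j = Real.sqrt (ρ j) / ∑ l, Real.sqrt (ρ l)) :
    ∀ (y yh : Fin n → ℝ) (z zh : Fin d → ℝ),
      (∑ j, (ρ j) ^ 2 / (p j) ^ 3 * (y j - yh j) ^ 2)
          + ∑ j, (1 / (p j) ^ 3) * (∑ i, A j i * (z i - zh i)) ^ 2
        ≤ ((∑ j, Real.sqrt (ρ j)) ^ 2) ^ 2
            * ((∑ j, (y j - yh j) ^ 2) + (∑ i, |z i - zh i|) ^ 2) := by
  intro y yh z zh
  set S := ∑ l, √(ρ l)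
  set Z := ∑ i, |z i - zh i|
  have hρ_nonneg (j : Fin n) : 0 ≤ ρ j := by
    obtain ⟨i, hi⟩ := (hρ j).1
    exact hi ▸ abs_nonneg _
  have hcoef (j : Fin n) : ρ j ^ 2 / p j ^ 3 = √(ρ j) * S ^ 3 :=
    hp j ▸ sq_div_sqrt_div_pow_three (hρ_nonneg j) S
  have hp_nonneg (j : Fin n) : 0 ≤ p j :=
    hp j ▸ div_nonneg (Real.sqrt_nonneg _) (sum_nonneg fun l _ => Real.sqrt_nonneg _)
  have hy :
      ∑ j, ρ j ^ 2 / p j ^ 3 * (y j - yh j) ^ 2 ≤ (S ^ 2) ^ 2 * ∑ j, (y j - yh j) ^ 2 := by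
    simp_rw [hcoef, mul_right_comm _ (S ^ 3), ← sum_mul]
    calc (∑ j, √(ρ j) * (y j - yh j) ^ 2) * S ^ 3
        ≤ (S * ∑ j, (y j - yh j) ^ 2) * S ^ 3 := by
          gcongr
          exact sum_mul_le_sum_mul_sum univ (fun j _ => Real.sqrt_nonneg _) fun j _ => sq_nonneg _
      _ = (S ^ 2) ^ 2 * ∑ j, (y j - yh j) ^ 2 := by ring
  have hz : ∑ j, 1 / p j ^ 3 * (∑ i, A j i * (z i - zh i)) ^ 2 ≤ (S ^ 2) ^ 2 * Z ^ 2 :=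
    calc ∑ j, 1 / p j ^ 3 * (∑ i, A j i * (z i - zh i)) ^ 2
        ≤ ∑ j, 1 / p j ^ 3 * (ρ j ^ 2 * Z ^ 2) :=
          sum_le_sum fun j _ => by
            gcongr
            exacts [one_div_nonneg.2 (pow_nonneg (hp_nonneg j) 3),
              sq_sum_mul_le_of_isGreatest (hρ j)]
      _ = ∑ j, √(ρ j) * S ^ 3 * Z ^ 2 := sum_congr rfl fun j _ => by rw [← hcoef]; ring
      _ = (S ^ 2) ^ 2 * Z ^ 2 := by rw [← sum_mul, ← sum_mul]; ring
  linarith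

/-- L_{p,q} ≤ ‖ρ‖_{1/2} for the row-based sum decomposition of the matrix-game
operator, with sampling probabilities p_j ∝ √(‖A_{j:}‖_∞).
Here ‖ρ‖_{1/2}² = ((Σ_j √ρ_j)²)² . -/
theorem stmt17 (n d : ℕ) (A : Matrix (Fin n) (Fin d) ℝ)
    (hA : ∀ j, ∃ i, A j i ≠ 0)
    (ρ : Fin n → ℝ) (hρ : ∀ j, IsGreatest (Set.range fun i => |A j i|) (ρ j))
    (hρ_pos : ∀ j, 0 < ρ j)
    (p : Fin n → ℝ) (hp : ∀ j, p j = Real.sqrt (ρ j) / ∑ l, Real.sqrt (ρ l)) :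
    ∀ (y yh : Fin n → ℝ) (z zh : Fin d → ℝ),
      (∑ j, (ρ j) ^ 2 / (p j) ^ 3 * (y j - yh j) ^ 2)
          + ∑ j, (1 / (p j) ^ 3) * (∑ i, A j i * (z i - zh i)) ^ 2
        ≤ ((∑ j, Real.sqrt (ρ j)) ^ 2) ^ 2
            * ((∑ j, (y j - yh j) ^ 2) + (∑ i, |z i - zh i|) ^ 2) :=
  stmt17_general n d A ρ hρ p hp

end
end

section
/- Let A ∈ ℝ^{n×d} have no zero column, let σ_j = ‖A_{:j}‖_∞ = max_{1≤i≤n} |A_{ij}| > 0 for j ∈ {1,…,d}, and define p_j = σ_j^{2/5} / Σ_{l=1}^d σ_l^{2/5}. Then for all w ∈ ℝ^n and s ∈ ℝ^d: Σ_{j=1}^d (1/p_j⁴) ( A_{:j}ᵀ w )² + Σ_{j=1}^d (σ_j²/p_j³) s_j² ≤ ‖σ‖_{2/5}² ( ‖w‖_1² + Σ_{j=1}^d p_j s_j² ), where ‖σ‖_{2/5} = ( Σ_{j=1}^d σ_j^{2/5} )^{5/2} and A_{:j} denotes the j-th column of A. -/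
open Finset

/-! With `r_j = σ_j^{2/5}` and `S = Σ r_l` we have `p_j = r_j / S`, `σ_j² = r_j⁵` and
`‖σ‖_{2/5}² = S⁵`. Hölder gives `(A_{:j}ᵀ w)² ≤ r_j⁵ ‖w‖₁²`, so the `j`-th term of the first sum
is at most `S⁴ r_j ‖w‖₁²`, and these add up to `S⁵ ‖w‖₁²`. The `j`-th term of the second sum is
`S³ r_j² s_j² ≤ S⁴ r_j s_j² = S⁵ p_j s_j²` because `r_j ≤ S`. -/

lemma abs_sum_mul_le_of_abs_le {ι : Type*} (s : Finset ι) (f g : ι → ℝ) {c : ℝ}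
    (h : ∀ i ∈ s, |f i| ≤ c) : |∑ i ∈ s, f i * g i| ≤ c * ∑ i ∈ s, |g i| :=
  calc |∑ i ∈ s, f i * g i| ≤ ∑ i ∈ s, |f i| * |g i| := by
        simpa only [abs_mul] using abs_sum_le_sum_abs (fun i => f i * g i) s
    _ ≤ ∑ i ∈ s, c * |g i| := sum_le_sum fun i hi =>
        mul_le_mul_of_nonneg_right (h i hi) (abs_nonneg _)
    _ = c * ∑ i ∈ s, |g i| := (mul_sum ..).symm

lemma one_div_div_pow_four_mul_le {r S x T : ℝ} (hr : 0 < r) (hS : 0 < S)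
    (hx : x ^ 2 ≤ r ^ 5 * T ^ 2) : 1 / (r / S) ^ 4 * x ^ 2 ≤ S ^ 4 * r * T ^ 2 :=
  calc 1 / (r / S) ^ 4 * x ^ 2 ≤ S ^ 4 / r ^ 4 * (r ^ 5 * T ^ 2) := by
        rw [div_pow, one_div_div]; gcongr
    _ = S ^ 4 * r * T ^ 2 := by field_simp

lemma pow_five_div_div_pow_three_mul_le {r S s : ℝ} (hr : 0 < r) (hrS : r ≤ S) :
    r ^ 5 / (r / S) ^ 3 * s ^ 2 ≤ S ^ 5 * (r / S * s ^ 2) := by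
  have hS : 0 < S := hr.trans_le hrS
  calc r ^ 5 / (r / S) ^ 3 * s ^ 2 = S ^ 3 * r * r * s ^ 2 := by field_simp
    _ ≤ S ^ 3 * r * S * s ^ 2 := by gcongr
    _ = S ^ 5 * (r / S * s ^ 2) := by field_simp

lemma sum_one_div_pow_four_add_sum_pow_five_div_pow_three_le {ι : Type*} [Fintype ι]
    {r : ι → ℝ} (hr : ∀ j, 0 < r j) {x : ι → ℝ} {T : ℝ} (hx : ∀ j, x j ^ 2 ≤ r j ^ 5 * T ^ 2)
    (s : ι → ℝ) :
    ∑ j, 1 / (r j / ∑ l, r l) ^ 4 * x j ^ 2 + ∑ j, r j ^ 5 / (r j / ∑ l, r l) ^ 3 * s j ^ 2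
      ≤ (∑ l, r l) ^ 5 * (T ^ 2 + ∑ j, r j / (∑ l, r l) * s j ^ 2) := by
  set S := ∑ l, r l
  have hrS : ∀ j, r j ≤ S := fun j => single_le_sum (fun l _ => (hr l).le) (mem_univ j)
  calc _ ≤ ∑ j, S ^ 4 * r j * T ^ 2 + ∑ j, S ^ 5 * (r j / S * s j ^ 2) := by
        refine add_le_add (sum_le_sum fun j _ => ?_) (sum_le_sum fun j _ => ?_)
        · exact one_div_div_pow_four_mul_le (hr j) ((hr j).trans_le (hrS j)) (hx j)
        · exact pow_five_div_div_pow_three_mul_le (hr j) (hrS j)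
    _ = S ^ 5 * (T ^ 2 + ∑ j, r j / S * s j ^ 2) := by
        rw [← sum_mul, ← mul_sum, ← mul_sum]; ring

lemma rpow_two_div_five_pow_five {x : ℝ} (hx : 0 ≤ x) : (x ^ ((2 : ℝ) / 5)) ^ 5 = x ^ 2 := by
  rw [← Real.rpow_mul_natCast hx]; norm_num

lemma rpow_five_div_two_sq {x : ℝ} (hx : 0 ≤ x) : (x ^ ((5 : ℝ) / 2)) ^ 2 = x ^ 5 := by
  rw [← Real.rpow_mul_natCast hx]; norm_num

theorem stmt18_general (n d : ℕ) (A : Matrix (Fin n) (Fin d) ℝ)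
    (σ : Fin d → ℝ) (hσ : ∀ j, IsGreatest (Set.range fun i => |A i j|) (σ j))
    (hσ_pos : ∀ j, 0 < σ j)
    (p : Fin d → ℝ) (hp : ∀ j, p j = (σ j) ^ ((2 : ℝ) / 5) / ∑ l, (σ l) ^ ((2 : ℝ) / 5)) :
    ∀ (w : Fin n → ℝ) (s : Fin d → ℝ),
      (∑ j, (1 / (p j) ^ 4) * (∑ i, A i j * w i) ^ 2)
          + ∑ j, (σ j) ^ 2 / (p j) ^ 3 * (s j) ^ 2
        ≤ ((∑ l, (σ l) ^ ((2 : ℝ) / 5)) ^ ((5 : ℝ) / 2)) ^ 2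
            * ((∑ i, |w i|) ^ 2 + ∑ j, p j * (s j) ^ 2) := by
  intro w s
  have hσ_sq : ∀ j, σ j ^ 2 = (σ j ^ ((2 : ℝ) / 5)) ^ 5 :=
    fun j => (rpow_two_div_five_pow_five (hσ_pos j).le).symm
  have hcol : ∀ j, (∑ i, A i j * w i) ^ 2 ≤ (σ j ^ ((2 : ℝ) / 5)) ^ 5 * (∑ i, |w i|) ^ 2 := by
    intro j
    rw [← hσ_sq, ← mul_pow, ← sq_abs]
    exact pow_le_pow_left₀ (abs_nonneg _)
      (abs_sum_mul_le_of_abs_le _ _ _ fun i _ => (hσ j).2 (Set.mem_range_self i)) 2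
  rw [rpow_five_div_two_sq (sum_nonneg fun l _ => Real.rpow_nonneg (hσ_pos l).le _)]
  simp only [hp, hσ_sq]
  exact sum_one_div_pow_four_add_sum_pow_five_div_pow_three_le
    (fun j => Real.rpow_pos_of_pos (hσ_pos j) _) hcol s

/-- L_{p,q} ≤ ‖σ‖_{2/5} for the box-simplex (ℓ∞-regression) operator decomposition,
with sampling probabilities p_j ∝ ‖A_{:j}‖_∞^{2/5} and the weighted primal norm
‖s‖_p² = Σ_j p_j s_j².  Here ‖σ‖_{2/5}² = (Σ_l σ_l^{2/5})⁵. -/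
theorem stmt18 (n d : ℕ) (A : Matrix (Fin n) (Fin d) ℝ)
    (hA : ∀ j, ∃ i, A i j ≠ 0)
    (σ : Fin d → ℝ) (hσ : ∀ j, IsGreatest (Set.range fun i => |A i j|) (σ j))
    (hσ_pos : ∀ j, 0 < σ j)
    (p : Fin d → ℝ) (hp : ∀ j, p j = (σ j) ^ ((2 : ℝ) / 5) / ∑ l, (σ l) ^ ((2 : ℝ) / 5)) :
    ∀ (w : Fin n → ℝ) (s : Fin d → ℝ),
      (∑ j, (1 / (p j) ^ 4) * (∑ i, A i j * w i) ^ 2)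
          + ∑ j, (σ j) ^ 2 / (p j) ^ 3 * (s j) ^ 2
        ≤ ((∑ l, (σ l) ^ ((2 : ℝ) / 5)) ^ ((5 : ℝ) / 2)) ^ 2
            * ((∑ i, |w i|) ^ 2 + ∑ j, p j * (s j) ^ 2) :=
  stmt18_general n d A σ hσ hσ_pos p hp
end
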